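/- arXiv:1805.09989 — 7 statements merged into one kernel-verified Lean document; each statement's English description precedes it below -/
import Mathlib

section
/- Any Minkowski-additive translation-invariant real-valued map m on nonempty convex polytopes in ℝ² is a valuation: if P, Q, and P ∪ Q are all convex polytopes, then m(P) + m(Q) = m(P ∪ Q) + m(P ∩ Q). -/
/-!
Sallee's identity `P + Q = (P ∪ Q) + (P ∩ Q)` turns Minkowski additivity directly into the
valuation property, once `P ∩ Q` is known to be a polytope. By Krein–Milman this reduces to
showing that an extreme point `x` of `P ∩ Q` is extreme in `P` or in `Q`. Otherwise `x ± u ∈ P`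
and `x ± v ∈ Q` with `u, v ≠ 0`. Each midpoint of `x + s • u` and `x + t • v` (`s, t = ±1`) lies
in `P` or in `Q`, and convexity then puts `x + (t / 3) • v` or `x + (s / 3) • u` in `P ∩ Q`.
The four cases force both `x ± u / 3` or both `x ± v / 3` into `P ∩ Q`, contradicting extremality.
-/

open Pointwise

/-- A (nonempty) convex polytope in the plane: the convex hull of a nonempty finite set. -/
def IsPolytope (P : Set (ℝ × ℝ)) : Prop :=
  ∃ S : Finset (ℝ × ℝ), S.Nonempty ∧ P = convexHull ℝ (S : Set (ℝ × ℝ))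

open Set

section ExtremePoints

variable {E : Type*} [AddCommGroup E] [Module ℝ E] {A P Q : Set E} {x u v : E}

theorem Convex.mem_extremePoints_iff_forall_add_sub (hA : Convex ℝ A) (hx : x ∈ A) :
    x ∈ A.extremePoints ℝ ↔ ∀ u, x + u ∈ A → x - u ∈ A → u = 0 := by
  constructor
  · intro hext u hu hu'
    have hmid : x ∈ openSegment ℝ (x + u) (x - u) :=
      ⟨2⁻¹, 2⁻¹, by norm_num, by norm_num, by norm_num, by module⟩
    simpa using (mem_extremePoints_iff_left.1 hext).2 _ hu _ hu' hmid
  · intro h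
    refine mem_extremePoints_iff_left.2 ⟨hx, fun y hy z hz hxyz => ?_⟩
    by_contra hyx
    rw [openSegment_eq_image'] at hxyz
    obtain ⟨θ, ⟨hθ₀, hθ₁⟩, rfl⟩ := hxyz
    have hzy : z - y ≠ 0 := fun h0 => hyx (by simp [h0])
    have hmem : ∀ s ∈ Icc (0 : ℝ) 1, y + s • (z - y) ∈ A := fun s hs =>
      hA.segment_subset hy hz (by rw [segment_eq_image']; exact ⟨s, hs, rfl⟩)
    set c := min θ (1 - θ)
    have hc : 0 < c := lt_min hθ₀ (sub_pos.2 hθ₁)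
    refine smul_ne_zero hc.ne' hzy (h (c • (z - y)) ?_ ?_)
    · convert hmem (θ + c) ⟨by positivity, by linarith [min_le_right θ (1 - θ)]⟩ using 1
      module
    · convert hmem (θ - c) ⟨by linarith [min_le_left θ (1 - θ)], by linarith⟩ using 1
      module

theorem Convex.add_inv_three_smul_mem (hA : Convex ℝ A)
    (hmid : x + (2 : ℝ)⁻¹ • (u + v) ∈ A) (hu : x - u ∈ A) : x + (3 : ℝ)⁻¹ • v ∈ A := by
  convert hA hmid hu (a := 2 / 3) (b := 1 / 3) (by norm_num) (by norm_num) (by norm_num) using 1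
  module

theorem add_inv_three_smul_mem_inter_or (hP : Convex ℝ P) (hQ : Convex ℝ Q)
    (hU : Convex ℝ (P ∪ Q)) (hxP : x ∈ P) (hxQ : x ∈ Q) (hu : x + u ∈ P) (hu' : x - u ∈ P)
    (hv : x + v ∈ Q) (hv' : x - v ∈ Q) :
    x + (3 : ℝ)⁻¹ • u ∈ P ∩ Q ∨ x + (3 : ℝ)⁻¹ • v ∈ P ∩ Q := by
  have third_mem {B : Set E} (hB : Convex ℝ B) {w : E} (hxB : x ∈ B) (hw : x + w ∈ B) :
      x + (3 : ℝ)⁻¹ • w ∈ B :=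
    hB.add_smul_mem hxB hw ⟨by norm_num, by norm_num⟩
  have hmid : x + (2 : ℝ)⁻¹ • (u + v) ∈ P ∪ Q := by
    convert hU (Or.inl hu) (Or.inr hv) (a := 2⁻¹) (b := 2⁻¹) (by norm_num) (by norm_num)
      (by norm_num) using 1
    module
  rcases hmid with hmidP | hmidQ
  · exact Or.inr ⟨hP.add_inv_three_smul_mem hmidP hu', third_mem hQ hxQ hv⟩
  · rw [add_comm u] at hmidQ
    exact Or.inl ⟨third_mem hP hxP hu, hQ.add_inv_three_smul_mem hmidQ hv'⟩

theorem extremePoints_inter_subset_union_of_convex_union (hP : Convex ℝ P) (hQ : Convex ℝ Q)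
    (hU : Convex ℝ (P ∪ Q)) :
    (P ∩ Q).extremePoints ℝ ⊆ P.extremePoints ℝ ∪ Q.extremePoints ℝ := by
  intro x hx
  have hxPQ : x ∈ P ∩ Q := extremePoints_subset hx
  rw [(hP.inter hQ).mem_extremePoints_iff_forall_add_sub hxPQ] at hx
  by_contra hnot
  rw [mem_union, hP.mem_extremePoints_iff_forall_add_sub hxPQ.1,
    hQ.mem_extremePoints_iff_forall_add_sub hxPQ.2] at hnot
  push Not at hnot
  obtain ⟨⟨u, hu, hu', hu0⟩, ⟨v, hv, hv', hv0⟩⟩ := hnot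
  have third_mem_inter_or (s t : E) (hs : s = u ∨ s = -u) (ht : t = v ∨ t = -v) :
      x + (3 : ℝ)⁻¹ • s ∈ P ∩ Q ∨ x + (3 : ℝ)⁻¹ • t ∈ P ∩ Q := by
    apply add_inv_three_smul_mem_inter_or hP hQ hU hxPQ.1 hxPQ.2 <;>
      rcases hs with rfl | rfl <;> rcases ht with rfl | rfl <;>
      simpa only [sub_neg_eq_add, ← sub_eq_add_neg]
  have not_both {w : E} (hw : w ≠ 0) :
      ¬ (x + (3 : ℝ)⁻¹ • w ∈ P ∩ Q ∧ x + (3 : ℝ)⁻¹ • -w ∈ P ∩ Q) := fun ⟨h, h'⟩ =>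
    hw (by simpa using hx _ h (by simpa only [smul_neg, ← sub_eq_add_neg] using h'))
  have hu_pair := not_both hu0
  have hv_pair := not_both hv0
  have h₁ := third_mem_inter_or u v (.inl rfl) (.inl rfl)
  have h₂ := third_mem_inter_or u (-v) (.inl rfl) (.inr rfl)
  have h₃ := third_mem_inter_or (-u) v (.inr rfl) (.inl rfl)
  have h₄ := third_mem_inter_or (-u) (-v) (.inr rfl) (.inr rfl)
  tauto

end ExtremePoints

section Sallee

variable {E : Type*} [AddCommGroup E] [Module ℝ E] [TopologicalSpace E] [ContinuousAdd E]
  [ContinuousSMul ℝ E] {P Q : Set E}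

theorem exists_mem_segment_inter_of_convex_union (hPc : IsClosed P) (hQc : IsClosed Q)
    (hU : Convex ℝ (P ∪ Q)) {x y : E} (hx : x ∈ P) (hy : y ∈ Q) :
    ∃ z ∈ segment ℝ x y, z ∈ P ∩ Q :=
  isPreconnected_closed_iff.1 (convex_segment x y).isPreconnected P Q hPc hQc
    (hU.segment_subset (.inl hx) (.inr hy)) ⟨x, left_mem_segment ℝ x y, hx⟩
    ⟨y, right_mem_segment ℝ x y, hy⟩

theorem add_eq_union_add_inter (hPc : IsClosed P) (hQc : IsClosed Q) (hU : Convex ℝ (P ∪ Q)) :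
    P + Q = (P ∪ Q) + (P ∩ Q) := by
  ext w
  constructor
  · rintro ⟨a, ha, b, hb, rfl⟩
    obtain ⟨z, ⟨p, q, hp, hq, hpq, rfl⟩, hz⟩ :=
      exists_mem_segment_inter_of_convex_union hPc hQc hU ha hb
    refine ⟨q • a + p • b, hU (.inl ha) (.inr hb) hq hp (by linarith), _, hz, ?_⟩
    show _ + _ = a + b
    rw [← one_smul ℝ (a + b), ← hpq]
    module
  · rintro ⟨a, haP | haQ, b, hb, rfl⟩
    · exact ⟨a, haP, b, hb.2, rfl⟩
    · exact ⟨b, hb.1, a, haQ, add_comm b a⟩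

end Sallee

section KreinMilman

variable {E : Type*} [AddCommGroup E] [Module ℝ E] [TopologicalSpace E] [T2Space E]
  [IsTopologicalAddGroup E] [ContinuousSMul ℝ E] [LocallyConvexSpace ℝ E] {K : Set E}

theorem IsCompact.convexHull_extremePoints_eq (hK : IsCompact K) (hc : Convex ℝ K)
    (hfin : (K.extremePoints ℝ).Finite) : convexHull ℝ (K.extremePoints ℝ) = K :=
  (hfin.isCompact_convexHull (𝕜 := ℝ)).isClosed.closure_eq.symm.trans
    (closure_convexHull_extremePoints hK hc)

end KreinMilman

namespace IsPolytope

variable {P Q : Set (ℝ × ℝ)}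

theorem nonempty (hP : IsPolytope P) : P.Nonempty := by
  obtain ⟨S, hS, rfl⟩ := hP
  exact convexHull_nonempty_iff.2 (Finset.coe_nonempty.2 hS)

theorem convex (hP : IsPolytope P) : Convex ℝ P := by
  obtain ⟨S, -, rfl⟩ := hP
  exact convex_convexHull ℝ _

theorem isCompact (hP : IsPolytope P) : IsCompact P := by
  obtain ⟨S, -, rfl⟩ := hP
  exact S.finite_toSet.isCompact_convexHull (𝕜 := ℝ)

theorem finite_extremePoints (hP : IsPolytope P) : (P.extremePoints ℝ).Finite := by
  obtain ⟨S, -, rfl⟩ := hP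
  exact S.finite_toSet.subset extremePoints_convexHull_subset

theorem of_isCompact (hK : IsCompact P) (hc : Convex ℝ P) (hne : P.Nonempty)
    (hfin : (P.extremePoints ℝ).Finite) : IsPolytope P :=
  ⟨hfin.toFinset, by simpa using hK.extremePoints_nonempty hne,
    by rw [hfin.coe_toFinset, hK.convexHull_extremePoints_eq hc hfin]⟩

theorem inter_of_convex_union (hP : IsPolytope P) (hQ : IsPolytope Q) (hU : Convex ℝ (P ∪ Q)) :
    IsPolytope (P ∩ Q) := by
  obtain ⟨x, hx⟩ := hP.nonempty
  obtain ⟨y, hy⟩ := hQ.nonempty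
  obtain ⟨z, -, hz⟩ := exists_mem_segment_inter_of_convex_union hP.isCompact.isClosed
    hQ.isCompact.isClosed hU hx hy
  refine of_isCompact (hP.isCompact.inter_right hQ.isCompact.isClosed) (hP.convex.inter hQ.convex)
    ⟨z, hz⟩ ((hP.finite_extremePoints.union hQ.finite_extremePoints).subset ?_)
  exact extremePoints_inter_subset_union_of_convex_union hP.convex hQ.convex hU

end IsPolytope

theorem stmt4_general (m : Set (ℝ × ℝ) → ℝ)
    (hadd : ∀ P Q : Set (ℝ × ℝ), IsPolytope P → IsPolytope Q → m (P + Q) = m P + m Q)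
    (P Q : Set (ℝ × ℝ)) (hP : IsPolytope P) (hQ : IsPolytope Q) (hPQ : IsPolytope (P ∪ Q)) :
    m P + m Q = m (P ∪ Q) + m (P ∩ Q) := by
  have hU : Convex ℝ (P ∪ Q) := hPQ.convex
  calc m P + m Q = m (P + Q) := (hadd P Q hP hQ).symm
    _ = m ((P ∪ Q) + (P ∩ Q)) := by
      rw [add_eq_union_add_inter hP.isCompact.isClosed hQ.isCompact.isClosed hU]
    _ = m (P ∪ Q) + m (P ∩ Q) := hadd _ _ hPQ (hP.inter_of_convex_union hQ hU)

theorem stmt4 (m : Set (ℝ × ℝ) → ℝ)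
    (hadd : ∀ P Q : Set (ℝ × ℝ), IsPolytope P → IsPolytope Q → m (P + Q) = m P + m Q)
    (htrans : ∀ (P : Set (ℝ × ℝ)) (t : ℝ × ℝ), IsPolytope P → m (P + {t}) = m P)
    (P Q : Set (ℝ × ℝ)) (hP : IsPolytope P) (hQ : IsPolytope Q) (hPQ : IsPolytope (P ∪ Q)) :
    m P + m Q = m (P ∪ Q) + m (P ∩ Q) :=
  stmt4_general m hadd P Q hP hQ hPQ
end

section
/- If P and Q are convex sets in ℝ² such that P ∪ Q is convex, then the Minkowski sum identity P + Q = (P ∪ Q) + (P ∩ Q) holds. -/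
open Pointwise

theorem stmt5 (P Q : Set (ℝ × ℝ))
    (hPne : P.Nonempty) (hPc : IsCompact P) (hPconv : Convex ℝ P)
    (hQne : Q.Nonempty) (hQc : IsCompact Q) (hQconv : Convex ℝ Q)
    (hint : (P ∩ Q).Nonempty) (hcup : Convex ℝ (P ∪ Q)) :
    P + Q = (P ∪ Q) + (P ∩ Q) := by
  apply Set.Subset.antisymm
  · rintro x ⟨p, hp, q, hq, rfl⟩
    set f : ℝ → ℝ × ℝ := fun t => (1 - t) • p + t • q with hf
    have hcont : Continuous f := by fun_prop
    have hclP : IsClosed (f ⁻¹' P) := hPc.isClosed.preimage hcont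
    have hclQ : IsClosed (f ⁻¹' Q) := hQc.isClosed.preimage hcont
    have hcover : Set.Icc (0:ℝ) 1 ⊆ f ⁻¹' P ∪ f ⁻¹' Q := by
      intro t ht
      have := hcup (Set.mem_union_left _ hp) (Set.mem_union_right _ hq)
        (by linarith [ht.2] : (0:ℝ) ≤ 1 - t) ht.1 (by ring)
      rcases this with h | h
      · exact Or.inl h
      · exact Or.inr h
    have h0 : (Set.Icc (0:ℝ) 1 ∩ f ⁻¹' P).Nonempty := by
      refine ⟨0, Set.mem_Icc.2 ⟨le_refl _, zero_le_one⟩, ?_⟩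
      simp [hf, hp]
    have h1 : (Set.Icc (0:ℝ) 1 ∩ f ⁻¹' Q).Nonempty := by
      refine ⟨1, Set.mem_Icc.2 ⟨zero_le_one, le_refl _⟩, ?_⟩
      simp [hf, hq]
    have hconn : IsPreconnected (Set.Icc (0:ℝ) 1) :=
      (isPreconnected_Icc)
    obtain ⟨t, ht, htPQ⟩ :=
      (isPreconnected_closed_iff.mp hconn) (f ⁻¹' P) (f ⁻¹' Q) hclP hclQ hcover h0 h1
    refine ⟨t • p + (1 - t) • q, ?_, f t, htPQ, ?_⟩
    · exact hcup (Set.mem_union_left _ hp) (Set.mem_union_right _ hq)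
        ht.1 (by linarith [ht.2] : (0:ℝ) ≤ 1 - t) (by ring)
    · simp only [hf]
      module
  · rintro x ⟨u, hu, v, hv, rfl⟩
    rcases hu with hu | hu
    · exact ⟨u, hu, v, hv.2, rfl⟩
    · exact ⟨v, hv.1, u, hu, add_comm v u⟩
end

section
/- Let ‖·‖ denote the gauge of K = conv{(1,1),(-1,0),(0,-1)} in ℝ². For every positive integer l, the number of primitive vectors v ∈ ℤ² with ‖v‖ = l equals 3·φ(l), where φ is Euler's totient function. -/
noncomputable def gaugeZ (v : ℤ × ℤ) : ℝ :=
  gauge (convexHull ℝ {((1:ℝ),(1:ℝ)), (-1,0), (0,-1)}) ((v.1 : ℝ), (v.2 : ℝ))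

open Pointwise

namespace Stmt8

def Nz (v : ℤ × ℤ) : ℤ := max (max (2*v.2 - v.1) (2*v.1 - v.2)) (-v.1 - v.2)

noncomputable abbrev K : Set (ℝ × ℝ) := convexHull ℝ {((1:ℝ),(1:ℝ)), (-1,0), (0,-1)}

lemma fbound (f : ℝ × ℝ → ℝ) (hf : IsLinearMap ℝ f)
    (h1 : f (1,1) ≤ 1) (h2 : f (-1,0) ≤ 1) (h3 : f (0,-1) ≤ 1) :
    ∀ p ∈ K, f p ≤ 1 := by
  intro p hp
  have : K ⊆ {q | f q ≤ 1} := by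
    apply convexHull_min _ (convex_halfSpace_le hf 1)
    rintro q hq
    simp only [Set.mem_insert_iff, Set.mem_singleton_iff] at hq
    rcases hq with rfl | rfl | rfl <;> assumption
  exact this hp

lemma combo_mem {α β γ n : ℝ} (hα : 0 ≤ α) (hβ : 0 ≤ β) (hγ : 0 ≤ γ) (hn : 0 < n)
    (hsum : α + β + γ = n) {p : ℝ × ℝ}
    (hp : α • ((1:ℝ),(1:ℝ)) + β • ((-1:ℝ),(0:ℝ)) + γ • ((0:ℝ),(-1:ℝ)) = p) :
    p ∈ n • (K : Set (ℝ × ℝ)) := by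
  rw [Set.mem_smul_set_iff_inv_smul_mem₀ hn.ne']
  have hmem : (Finset.univ : Finset (Fin 3)).centerMass ![α, β, γ]
      ![((1:ℝ),(1:ℝ)), (-1,0), (0,-1)] ∈ K := by
    apply Finset.centerMass_mem_convexHull
    · intro i _; fin_cases i <;> simpa
    · rw [Fin.sum_univ_three]; simpa [hsum]
    · intro i _; fin_cases i <;> simp
  have hc : (Finset.univ : Finset (Fin 3)).centerMass ![α, β, γ]
      ![((1:ℝ),(1:ℝ)), (-1,0), (0,-1)] = n⁻¹ • p := by
    rw [Finset.centerMass, Fin.sum_univ_three, Fin.sum_univ_three]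
    simp only [Matrix.cons_val_zero, Matrix.cons_val_one, Matrix.head_cons,
      Matrix.cons_val_two, Matrix.tail_cons]
    rw [hsum, hp]
  rwa [hc] at hmem

end Stmt8

namespace Stmt8

lemma lin1 : IsLinearMap ℝ (fun p : ℝ × ℝ => 2*p.2 - p.1) := by
  constructor <;> intros <;>
    simp [Prod.fst_add, Prod.snd_add, Prod.smul_fst, Prod.smul_snd, smul_eq_mul] <;> ring

lemma lin2 : IsLinearMap ℝ (fun p : ℝ × ℝ => 2*p.1 - p.2) := by
  constructor <;> intros <;>
    simp [Prod.fst_add, Prod.snd_add, Prod.smul_fst, Prod.smul_snd, smul_eq_mul] <;> ring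

lemma lin3 : IsLinearMap ℝ (fun p : ℝ × ℝ => -p.1 - p.2) := by
  constructor <;> intros <;>
    simp [Prod.fst_add, Prod.snd_add, Prod.smul_fst, Prod.smul_snd, smul_eq_mul] <;> ring

lemma gauge_eq_Nz (x y : ℤ) (hv : ¬(x = 0 ∧ y = 0)) :
    gaugeZ (x, y) = ((Nz (x, y) : ℤ) : ℝ) := by
  have hNz : Nz (x, y) = max (max (2*y - x) (2*x - y)) (-x - y) := rfl
  have hA : 2*y - x ≤ Nz (x, y) := by rw [hNz]; exact le_trans (le_max_left _ _) (le_max_left _ _)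
  have hB : 2*x - y ≤ Nz (x, y) := by rw [hNz]; exact le_trans (le_max_right _ _) (le_max_left _ _)
  have hC : -x - y ≤ Nz (x, y) := by rw [hNz]; exact le_max_right _ _
  have hcases : Nz (x, y) = 2*y - x ∨ Nz (x, y) = 2*x - y ∨ Nz (x, y) = -x - y := by
    rw [hNz]
    rcases max_choice (max (2*y - x) (2*x - y)) (-x - y) with h | h <;>
      rcases max_choice (2*y - x) (2*x - y) with h2 | h2 <;> omega
  have hn0 : 0 < Nz (x, y) := by omega
  have hn0' : (0:ℝ) < ((Nz (x, y) : ℤ) : ℝ) := by exact_mod_cast hn0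
  have hmem : ((x:ℝ), (y:ℝ)) ∈ ((Nz (x, y) : ℤ) : ℝ) • (K : Set (ℝ × ℝ)) := by
    rcases hcases with h | h | h
    · refine combo_mem (α := (y:ℝ)) (β := ((y - x : ℤ) : ℝ)) (γ := 0)
        ?_ ?_ ?_ hn0' ?_ ?_
      · exact_mod_cast (by omega : (0:ℤ) ≤ y)
      · exact_mod_cast (by omega : (0:ℤ) ≤ y - x)
      · exact le_rfl
      · push_cast; rw [h]; push_cast; ring
      · simp [Prod.ext_iff, Prod.smul_mk]
    · refine combo_mem (α := (x:ℝ)) (β := 0) (γ := ((x - y : ℤ) : ℝ))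
        ?_ ?_ ?_ hn0' ?_ ?_
      · exact_mod_cast (by omega : (0:ℤ) ≤ x)
      · exact le_rfl
      · exact_mod_cast (by omega : (0:ℤ) ≤ x - y)
      · push_cast; rw [h]; push_cast; ring
      · simp [Prod.ext_iff, Prod.smul_mk]
    · refine combo_mem (α := 0) (β := ((-x : ℤ) : ℝ)) (γ := ((-y : ℤ) : ℝ))
        ?_ ?_ ?_ hn0' ?_ ?_
      · exact le_rfl
      · exact_mod_cast (by omega : (0:ℤ) ≤ -x)
      · exact_mod_cast (by omega : (0:ℤ) ≤ -y)
      · push_cast; rw [h]; push_cast; ring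
      · simp [Prod.ext_iff, Prod.smul_mk]
  unfold gaugeZ
  refine le_antisymm (gauge_le_of_mem hn0'.le hmem) ?_
  rw [gauge_def]
  apply le_csInf ⟨_, Set.mem_sep (Set.mem_Ioi.mpr hn0') hmem⟩
  rintro r ⟨hr, hrm⟩
  rw [Set.mem_Ioi] at hr
  obtain ⟨k, hkK, hke⟩ := hrm
  have hke1 : (x:ℝ) = r * k.1 := by
    have := congrArg Prod.fst hke; simpa [Prod.smul_def, smul_eq_mul] using this.symm
  have hke2 : (y:ℝ) = r * k.2 := by
    have := congrArg Prod.snd hke; simpa [Prod.smul_def, smul_eq_mul] using this.symm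
  have e1 : 2*k.2 - k.1 ≤ 1 := fbound _ lin1 (by norm_num) (by norm_num) (by norm_num) k hkK
  have e2 : 2*k.1 - k.2 ≤ 1 := fbound _ lin2 (by norm_num) (by norm_num) (by norm_num) k hkK
  have e3 : -k.1 - k.2 ≤ 1 := fbound _ lin3 (by norm_num) (by norm_num) (by norm_num) k hkK
  rcases hcases with h | h | h <;> rw [h] <;> push_cast <;> rw [hke1, hke2] <;> nlinarith

end Stmt8

namespace Stmt8

lemma Nz_eq_iff (x y l : ℤ) :
    Nz (x, y) = l ↔ ((2*y - x ≤ l ∧ 2*x - y ≤ l ∧ -x - y ≤ l) ∧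
      (2*y - x = l ∨ 2*x - y = l ∨ -x - y = l)) := by
  have : Nz (x, y) = max (max (2*y - x) (2*x - y)) (-x - y) := rfl
  rw [this]
  simp only [max_eq_iff, max_le_iff]
  omega

lemma copA (a b : ℤ) : Int.gcd (2*b - a) b = 1 ↔ Int.gcd a b = 1 := by
  rw [← Int.isCoprime_iff_gcd_eq_one, ← Int.isCoprime_iff_gcd_eq_one,
    show 2*b - a = -a + 2*b by ring, IsCoprime.add_mul_right_left_iff,
    IsCoprime.neg_left_iff]

lemma copB (a b : ℤ) : Int.gcd (-b) (b - a) = 1 ↔ Int.gcd b a = 1 := by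
  rw [← Int.isCoprime_iff_gcd_eq_one, ← Int.isCoprime_iff_gcd_eq_one,
    IsCoprime.neg_left_iff, show b - a = -a + b*1 by ring,
    IsCoprime.add_mul_left_right_iff, IsCoprime.neg_right_iff]

lemma copC (a b : ℤ) : Int.gcd (a - b) (a - 2*b) = 1 ↔ Int.gcd b a = 1 := by
  rw [← Int.isCoprime_iff_gcd_eq_one, ← Int.isCoprime_iff_gcd_eq_one,
    show a - 2*b = -b + (a - b)*1 by ring, IsCoprime.add_mul_left_right_iff,
    IsCoprime.neg_right_iff, show a - b = a + (-1)*b by ring,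
    IsCoprime.add_mul_right_left_iff, isCoprime_comm]

end Stmt8

open Stmt8 in
theorem stmt8 (l : ℕ) (hl : 1 ≤ l) :
    {v : ℤ × ℤ | Int.gcd v.1 v.2 = 1 ∧ gaugeZ v = (l : ℝ)}.ncard = 3 * Nat.totient l := by
  classical
  -- replace gauge by integer norm
  have hset : {v : ℤ × ℤ | Int.gcd v.1 v.2 = 1 ∧ gaugeZ v = (l : ℝ)}
      = {v : ℤ × ℤ | Int.gcd v.1 v.2 = 1 ∧ Nz v = (l : ℤ)} := by
    ext ⟨x, y⟩
    simp only [Set.mem_setOf_eq]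
    have hiff : Int.gcd x y = 1 → (gaugeZ (x, y) = (l : ℝ) ↔ Nz (x, y) = (l : ℤ)) := by
      intro h1
      have hxy : ¬(x = 0 ∧ y = 0) := by
        rintro ⟨rfl, rfl⟩; simp at h1
      rw [gauge_eq_Nz x y hxy]
      exact_mod_cast Iff.rfl
    constructor
    · rintro ⟨h1, h2⟩; exact ⟨h1, (hiff h1).mp h2⟩
    · rintro ⟨h1, h2⟩; exact ⟨h1, (hiff h1).mpr h2⟩
  rw [hset]
  set Yl : Finset ℕ := (Finset.range l).filter (fun t => Nat.gcd t l = 1) with hYl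
  set g1 : ℕ → ℤ × ℤ := fun t => ((2*(t:ℤ) - l), (t:ℤ)) with hg1
  set g2 : ℕ → ℤ × ℤ := fun t => ((-(t:ℤ)), ((t:ℤ) - l)) with hg2
  set g3 : ℕ → ℤ × ℤ := fun t => (((l:ℤ) - t), ((l:ℤ) - 2*t)) with hg3
  have hmain : {v : ℤ × ℤ | Int.gcd v.1 v.2 = 1 ∧ Nz v = (l : ℤ)}
      = ↑((Yl.image g1 ∪ Yl.image g2) ∪ Yl.image g3) := by
    ext ⟨x, y⟩
    simp only [Finset.coe_union, Set.mem_union, Finset.coe_image, Set.mem_image,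
      Finset.mem_coe, Finset.mem_filter, Finset.mem_range, Set.mem_setOf_eq, hYl, hg1, hg2, hg3]
    constructor
    · rintro ⟨hgcd, hN⟩
      rw [Nz_eq_iff] at hN
      obtain ⟨⟨hA, hB, hC⟩, hcs⟩ := hN
      by_cases hc1 : 2*y - x = (l:ℤ) ∧ y < l
      · left; left
        refine ⟨y.toNat, ⟨?_, ?_⟩, ?_⟩
        · omega
        · have h1 : Int.gcd ((l:ℤ)) y = 1 := by
            rw [← copA]; rwa [show 2*y - (l:ℤ) = x by omega]
          have h2 : ((y.toNat : ℤ)) = y := Int.toNat_of_nonneg (by omega)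
          have h3 : Int.gcd ((y.toNat : ℕ) : ℤ) ((l : ℕ) : ℤ) = Nat.gcd y.toNat l :=
            Int.gcd_natCast_natCast _ _
          rw [← h3, h2, Int.gcd_comm]; exact h1
        · simp only [Prod.mk.injEq]; omega
      · by_cases hc3 : 2*x - y = (l:ℤ) ∧ 0 < x
        · right
          refine ⟨(l - x.toNat : ℕ), ⟨?_, ?_⟩, ?_⟩
          · omega
          · have h0 : Int.gcd ((l:ℤ) - ((l:ℤ) - x)) ((l:ℤ) - 2*((l:ℤ) - x)) = 1 := by
              rw [show (l:ℤ) - ((l:ℤ) - x) = x by ring,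
                show (l:ℤ) - 2*((l:ℤ) - x) = 2*x - (l:ℤ) by ring,
                (by omega : 2*x - (l:ℤ) = y)]
              exact hgcd
            have h1 : Int.gcd ((l:ℤ) - x) (l:ℤ) = 1 := (copC _ _).mp h0
            have h2 : (((l - x.toNat : ℕ)) : ℤ) = (l:ℤ) - x := by omega
            rw [← Int.gcd_natCast_natCast, h2]; exact h1
          · simp only [Prod.mk.injEq]; omega
        · left; right
          have hkey : -x - y = (l:ℤ) ∧ -(l:ℤ) < x ∧ x ≤ 0 := by omega
          refine ⟨(-x).toNat, ⟨?_, ?_⟩, ?_⟩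
          · omega
          · have h1 : Int.gcd (-x) (l:ℤ) = 1 := by
              rw [← copB (a := (l:ℤ)) (b := -x), neg_neg, show -x - (l:ℤ) = y by omega]
              exact hgcd
            have h2 : (((-x).toNat : ℤ)) = -x := Int.toNat_of_nonneg (by omega)
            rw [← Int.gcd_natCast_natCast, h2]; exact h1
          · simp only [Prod.mk.injEq]; omega
    · rintro ((⟨t, ⟨ht, hg⟩, he⟩ | ⟨t, ⟨ht, hg⟩, he⟩) | ⟨t, ⟨ht, hg⟩, he⟩) <;>
        simp only [Prod.mk.injEq] at he <;> obtain ⟨hex, hey⟩ := he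
      · constructor
        · rw [← hex, ← hey, copA, Int.gcd_comm, Int.gcd_natCast_natCast]
          exact hg
        · rw [Nz_eq_iff]; omega
      · constructor
        · rw [← hex, ← hey, copB, Int.gcd_natCast_natCast]
          exact hg
        · rw [Nz_eq_iff]; omega
      · constructor
        · rw [← hex, ← hey, copC, Int.gcd_natCast_natCast]
          exact hg
        · rw [Nz_eq_iff]; omega
  rw [hmain, Set.ncard_coe_finset]
  have hinj1 : Function.Injective g1 := by
    intro a b h; simp only [hg1, Prod.mk.injEq] at h; omega
  have hinj2 : Function.Injective g2 := by
    intro a b h; simp only [hg2, Prod.mk.injEq] at h; omega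
  have hinj3 : Function.Injective g3 := by
    intro a b h; simp only [hg3, Prod.mk.injEq] at h; omega
  have hd12 : Disjoint (Yl.image g1) (Yl.image g2) := by
    rw [Finset.disjoint_left]; rintro a ha hb
    simp only [Finset.mem_image, hYl, Finset.mem_filter, Finset.mem_range, hg1, hg2] at ha hb
    obtain ⟨t, ⟨ht, _⟩, rfl⟩ := ha
    obtain ⟨s, ⟨hs, _⟩, he⟩ := hb
    simp only [Prod.mk.injEq] at he
    omega
  have hd13 : Disjoint (Yl.image g1) (Yl.image g3) := by
    rw [Finset.disjoint_left]; rintro a ha hb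
    simp only [Finset.mem_image, hYl, Finset.mem_filter, Finset.mem_range, hg1, hg3] at ha hb
    obtain ⟨t, ⟨ht, _⟩, rfl⟩ := ha
    obtain ⟨s, ⟨hs, _⟩, he⟩ := hb
    simp only [Prod.mk.injEq] at he
    omega
  have hd23 : Disjoint (Yl.image g2) (Yl.image g3) := by
    rw [Finset.disjoint_left]; rintro a ha hb
    simp only [Finset.mem_image, hYl, Finset.mem_filter, Finset.mem_range, hg2, hg3] at ha hb
    obtain ⟨t, ⟨ht, _⟩, rfl⟩ := ha
    obtain ⟨s, ⟨hs, _⟩, he⟩ := hb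
    simp only [Prod.mk.injEq] at he
    omega
  have hd : Disjoint (Yl.image g1 ∪ Yl.image g2) (Yl.image g3) :=
    Finset.disjoint_union_left.mpr ⟨hd13, hd23⟩
  rw [Finset.card_union_of_disjoint hd, Finset.card_union_of_disjoint hd12,
    Finset.card_image_of_injective _ hinj1, Finset.card_image_of_injective _ hinj2,
    Finset.card_image_of_injective _ hinj3]
  have hY : Yl.card = Nat.totient l := by
    rw [hYl, Nat.totient]
    congr 1
    apply Finset.filter_congr
    intro t _
    simp [Nat.Coprime, Nat.gcd_comm]
  rw [hY]; ring
end

section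
/- Fix k ∈ ℕ and the gauge ‖·‖ of K = conv{(1,1),(-1,0),(0,-1)} on ℤ². Among all sets T ⊂ ℤ² \ {0} of cardinality k with no two elements positive multiples of each other, the sum ∑_{v∈T} ‖v‖ is minimized if and only if T is saturated, i.e., every v ∈ T is primitive and whenever w ∈ ℤ² is primitive with ‖w‖ < ‖v‖ for some v ∈ T, then w ∈ T. -/
/-- A vector configuration: a finite set of nonzero lattice vectors, no two of which lie on a
common ray (are positive multiples of each other). -/
def IsVectorConfig (T : Finset (ℤ × ℤ)) : Prop :=
  (0 : ℤ × ℤ) ∉ T ∧ ∀ v ∈ T, ∀ w ∈ T, v ≠ w → ¬∃ a b : ℕ, 0 < a ∧ 0 < b ∧ a • v = b • w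

/-- A saturated set: all members are primitive, and it contains every primitive vector of
strictly smaller gauge norm than some member. -/
def IsSaturated (T : Finset (ℤ × ℤ)) : Prop :=
  (∀ v ∈ T, Int.gcd v.1 v.2 = 1) ∧
    ∀ w : ℤ × ℤ, Int.gcd w.1 w.2 = 1 → (∃ v ∈ T, gaugeZ w < gaugeZ v) → w ∈ T

/-! The argument only uses that the gauge `N` of a convex body with `0` in its interior is
positively homogeneous and positive off `0`. A vector configuration is a finite set of nonzero
vectors on which `v ↦ v̂` is injective, so replacing each member by its primitive part gives a
configuration of primitive vectors of the same size and no larger total gauge; among sets of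
primitive vectors of a given size, a saturated one has the least sum, because every primitive
vector it misses is at least as long as each of its members. Conversely, in a minimal
configuration a non-primitive `v` could be exchanged for `v̂`, and a primitive `w ∉ T` shorter
than some `v ∈ T` could be exchanged for `v`, each time lowering the sum. -/

open Topology

namespace Finset

variable {α β : Type*} [AddCommMonoid β] [LinearOrder β] [IsOrderedAddMonoid β]

theorem sum_le_sum_of_card_eq_of_forall_le {A B : Finset α} {f : α → β} (hcard : #A = #B)
    (hle : ∀ a ∈ A, ∀ b ∈ B, f a ≤ f b) : ∑ a ∈ A, f a ≤ ∑ b ∈ B, f b := by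
  rcases B.eq_empty_or_nonempty with rfl | hB
  · rw [card_empty, card_eq_zero] at hcard
    rw [hcard]
  calc ∑ a ∈ A, f a ≤ #A • B.inf' hB f :=
        sum_le_card_nsmul _ _ _ fun a ha => le_inf' hB _ (hle a ha)
    _ = #B • B.inf' hB f := by rw [hcard]
    _ ≤ ∑ b ∈ B, f b := card_nsmul_le_sum _ _ _ fun b hb => inf'_le f hb

theorem sum_le_sum_of_card_eq_of_forall_lt_mem [DecidableEq α] {T V : Finset α} {f : α → β}
    (hcard : #T = #V) (hT : ∀ w ∈ V, (∃ v ∈ T, f w < f v) → w ∈ T) :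
    ∑ v ∈ T, f v ≤ ∑ v ∈ V, f v := by
  have hsdiff : ∑ v ∈ T \ V, f v ≤ ∑ v ∈ V \ T, f v := by
    refine sum_le_sum_of_card_eq_of_forall_le (card_sdiff_comm hcard) fun a ha b hb => ?_
    rw [mem_sdiff] at ha hb
    by_contra! hlt
    exact hb.2 (hT b hb.1 ⟨a, ha.1, hlt⟩)
  rw [← sum_inter_add_sum_sdiff T V, ← sum_inter_add_sum_sdiff V T, inter_comm]
  gcongr

end Finset

/-- The primitive vector on the ray of `v`; `primPart 0 = 0`. -/
def primPart (v : ℤ × ℤ) : ℤ × ℤ := (v.1 / Int.gcd v.1 v.2, v.2 / Int.gcd v.1 v.2)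

theorem gcd_nsmul_primPart (v : ℤ × ℤ) : Int.gcd v.1 v.2 • primPart v = v := by
  ext
  · rw [Prod.smul_fst, nsmul_eq_mul]
    exact Int.mul_ediv_cancel' (Int.gcd_dvd_left _ _)
  · rw [Prod.smul_snd, nsmul_eq_mul]
    exact Int.mul_ediv_cancel' (Int.gcd_dvd_right _ _)

theorem gcd_pos_of_ne_zero {v : ℤ × ℤ} (hv : v ≠ 0) : 0 < Int.gcd v.1 v.2 :=
  Int.gcd_pos_iff.2 (by contrapose! hv; exact Prod.ext hv.1 hv.2)

theorem gcd_primPart {v : ℤ × ℤ} (hv : v ≠ 0) : Int.gcd (primPart v).1 (primPart v).2 = 1 :=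
  Int.gcd_div_gcd_div_gcd (gcd_pos_of_ne_zero hv)

theorem primPart_of_gcd_eq_one {v : ℤ × ℤ} (hv : Int.gcd v.1 v.2 = 1) : primPart v = v := by
  simp [primPart, hv]

theorem ne_zero_of_gcd_eq_one {v : ℤ × ℤ} (hv : Int.gcd v.1 v.2 = 1) : v ≠ 0 := by
  rintro rfl
  simp at hv

theorem gcd_nsmul (n : ℕ) (v : ℤ × ℤ) : Int.gcd (n • v).1 (n • v).2 = n * Int.gcd v.1 v.2 := by
  rw [Prod.smul_fst, Prod.smul_snd, nsmul_eq_mul, nsmul_eq_mul, Int.gcd_mul_left,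
    Int.natAbs_natCast]

theorem eq_of_nsmul_eq_nsmul_of_gcd_eq_one {p q : ℤ × ℤ} (hp : Int.gcd p.1 p.2 = 1)
    (hq : Int.gcd q.1 q.2 = 1) {m n : ℕ} (hm : 0 < m) (h : m • p = n • q) : p = q := by
  have hmn : m = n := by
    have hgcd : Int.gcd (m • p).1 (m • p).2 = Int.gcd (n • q).1 (n • q).2 := by rw [h]
    rwa [gcd_nsmul, gcd_nsmul, hp, hq, mul_one, mul_one] at hgcd
  subst hmn
  exact nsmul_right_injective hm.ne' h

theorem exists_nsmul_eq_nsmul_iff_primPart_eq {v w : ℤ × ℤ} (hv : v ≠ 0) (hw : w ≠ 0) :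
    (∃ a b : ℕ, 0 < a ∧ 0 < b ∧ a • v = b • w) ↔ primPart v = primPart w := by
  constructor
  · rintro ⟨a, b, ha, -, hab⟩
    refine eq_of_nsmul_eq_nsmul_of_gcd_eq_one (gcd_primPart hv) (gcd_primPart hw)
      (m := a * Int.gcd v.1 v.2) (n := b * Int.gcd w.1 w.2)
      (Nat.mul_pos ha (gcd_pos_of_ne_zero hv)) ?_
    rw [mul_smul, mul_smul, gcd_nsmul_primPart, gcd_nsmul_primPart, hab]
  · intro h
    refine ⟨Int.gcd w.1 w.2, Int.gcd v.1 v.2, gcd_pos_of_ne_zero hw, gcd_pos_of_ne_zero hv, ?_⟩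
    conv_lhs => rw [← gcd_nsmul_primPart v, h, smul_comm, gcd_nsmul_primPart]

theorem isVectorConfig_iff {T : Finset (ℤ × ℤ)} :
    IsVectorConfig T ↔ (0 : ℤ × ℤ) ∉ T ∧ Set.InjOn primPart T := by
  refine and_congr_right fun h0 => ?_
  have hne : ∀ v ∈ T, v ≠ 0 := fun v hv h => h0 (h ▸ hv)
  refine forall₂_congr fun v hv => forall₂_congr fun w hw => ?_
  rw [exists_nsmul_eq_nsmul_iff_primPart_eq (hne v hv) (hne w hw), not_imp_not]

theorem convexHull_triangle_mem_nhds_zero :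
    convexHull ℝ {((1:ℝ),(1:ℝ)), (-1,0), (0,-1)} ∈ 𝓝 (0 : ℝ × ℝ) := by
  set U : Set (ℝ × ℝ) := {p | 2 * p.2 - p.1 < 1 ∧ 2 * p.1 - p.2 < 1 ∧ -p.1 - p.2 < 1}
  have hU : IsOpen U := by
    simp only [U, Set.ofPred_and]
    refine .inter (isOpen_lt ?_ ?_) (.inter (isOpen_lt ?_ ?_) (isOpen_lt ?_ ?_)) <;> fun_prop
  refine Filter.mem_of_superset (hU.mem_nhds (by norm_num [U])) fun p ⟨h₁, h₂, h₃⟩ => ?_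
  -- barycentric coordinates of `p` with respect to the three vertices
  let w : Fin 3 → ℝ := ![(1 + p.1 + p.2) / 3, (1 - 2 * p.1 + p.2) / 3, (1 + p.1 - 2 * p.2) / 3]
  let z : Fin 3 → ℝ × ℝ := ![(1, 1), (-1, 0), (0, -1)]
  have hp : ∑ i, w i • z i = p := by
    simp only [Fin.sum_univ_three, w, z, Matrix.cons_val_zero, Matrix.cons_val_one,
      Matrix.cons_val_two, Matrix.tail_cons, Matrix.head_cons, Prod.smul_mk, Prod.mk_add_mk,
      smul_eq_mul]
    ext <;> ring
  rw [← hp]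
  refine (convex_convexHull ℝ _).sum_mem (fun i _ => ?_) ?_ (fun i _ => subset_convexHull ℝ _ ?_)
  · fin_cases i <;> dsimp [w] <;> linarith
  · rw [Fin.sum_univ_three]
    dsimp [w]
    ring
  · fin_cases i <;> simp [z]

theorem gaugeZ_nsmul (n : ℕ) (v : ℤ × ℤ) : gaugeZ (n • v) = n * gaugeZ v := by
  have h : (((n • v).1 : ℝ), ((n • v).2 : ℝ)) = (n : ℝ) • ((v.1 : ℝ), (v.2 : ℝ)) := by
    ext <;> simp
  rw [gaugeZ, h, gauge_smul_of_nonneg (Nat.cast_nonneg n), smul_eq_mul, gaugeZ]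

theorem gaugeZ_pos {v : ℤ × ℤ} (hv : v ≠ 0) : 0 < gaugeZ v := by
  refine (gauge_pos (absorbent_nhds_zero convexHull_triangle_mem_nhds_zero)
    ((NormedSpace.isVonNBounded_iff ℝ).2 (isBounded_convexHull.2 (Set.toFinite _).isBounded))).2 ?_
  contrapose! hv
  simp only [Prod.mk_eq_zero, Int.cast_eq_zero] at hv
  exact Prod.ext hv.1 hv.2

structure IsLatticeGauge (N : ℤ × ℤ → ℝ) : Prop where
  nsmul : ∀ (n : ℕ) (v : ℤ × ℤ), N (n • v) = n * N v
  pos : ∀ v : ℤ × ℤ, v ≠ 0 → 0 < N v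

theorem isLatticeGauge_gaugeZ : IsLatticeGauge gaugeZ :=
  ⟨gaugeZ_nsmul, fun _ => gaugeZ_pos⟩

namespace IsLatticeGauge

variable {N : ℤ × ℤ → ℝ}

theorem apply_eq_gcd_mul (hN : IsLatticeGauge N) (v : ℤ × ℤ) :
    N v = Int.gcd v.1 v.2 * N (primPart v) := by
  conv_lhs => rw [← gcd_nsmul_primPart v, hN.nsmul]

theorem apply_primPart_le (hN : IsLatticeGauge N) {v : ℤ × ℤ} (hv : v ≠ 0) :
    N (primPart v) ≤ N v := by
  rw [hN.apply_eq_gcd_mul v]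
  refine le_mul_of_one_le_left (hN.pos _ (ne_zero_of_gcd_eq_one (gcd_primPart hv))).le ?_
  exact_mod_cast gcd_pos_of_ne_zero hv

theorem apply_primPart_lt (hN : IsLatticeGauge N) {v : ℤ × ℤ} (hv : v ≠ 0)
    (hnp : Int.gcd v.1 v.2 ≠ 1) : N (primPart v) < N v := by
  rw [hN.apply_eq_gcd_mul v]
  refine lt_mul_of_one_lt_left (hN.pos _ (ne_zero_of_gcd_eq_one (gcd_primPart hv))) ?_
  exact_mod_cast lt_of_le_of_ne (gcd_pos_of_ne_zero hv) (Ne.symm hnp)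

end IsLatticeGauge

theorem IsVectorConfig.insert_erase {T : Finset (ℤ × ℤ)} (hT : IsVectorConfig T) {v w : ℤ × ℤ}
    (hw : w ≠ 0) (hray : ∀ y ∈ T.erase v, primPart y ≠ primPart w) :
    IsVectorConfig (insert w (T.erase v)) := by
  obtain ⟨h0, hinj⟩ := isVectorConfig_iff.1 hT
  have hwT : w ∉ T.erase v := fun h => hray w h rfl
  refine isVectorConfig_iff.2 ⟨?_, ?_⟩
  · rw [Finset.mem_insert, not_or]
    exact ⟨hw.symm, fun h => h0 (Finset.mem_of_mem_erase h)⟩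
  · rw [Finset.coe_insert, Set.injOn_insert (by exact_mod_cast hwT)]
    refine ⟨hinj.mono (Finset.coe_subset.2 (Finset.erase_subset v T)), ?_⟩
    rintro ⟨y, hy, h⟩
    exact hray y hy h

def IsMinimalConfig (N : ℤ × ℤ → ℝ) (T : Finset (ℤ × ℤ)) : Prop :=
  ∀ U : Finset (ℤ × ℤ), IsVectorConfig U → U.card = T.card → ∑ v ∈ T, N v ≤ ∑ v ∈ U, N v

namespace IsMinimalConfig

variable {N : ℤ × ℤ → ℝ} {T : Finset (ℤ × ℤ)}

/-- Otherwise exchanging `v` for `w` would give a configuration of smaller total gauge. -/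
theorem exists_primPart_eq (hmin : IsMinimalConfig N T) (hT : IsVectorConfig T) {v w : ℤ × ℤ}
    (hv : v ∈ T) (hw : w ≠ 0) (hlt : N w < N v) : ∃ y ∈ T.erase v, primPart y = primPart w := by
  by_contra! hray
  have hwT : w ∉ T.erase v := fun h => hray w h rfl
  refine (hmin _ (hT.insert_erase hw hray) ?_).not_gt ?_
  · rw [Finset.card_insert_of_notMem hwT, Finset.card_erase_add_one hv]
  · rw [Finset.sum_insert hwT, ← Finset.add_sum_erase T N hv]
    gcongr

theorem gcd_eq_one (hmin : IsMinimalConfig N T) (hT : IsVectorConfig T) (hN : IsLatticeGauge N)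
    {v : ℤ × ℤ} (hv : v ∈ T) : Int.gcd v.1 v.2 = 1 := by
  by_contra hnp
  have hv0 : v ≠ 0 := fun h => hT.1 (h ▸ hv)
  obtain ⟨y, hy, h⟩ := hmin.exists_primPart_eq hT hv (ne_zero_of_gcd_eq_one (gcd_primPart hv0))
    (hN.apply_primPart_lt hv0 hnp)
  rw [primPart_of_gcd_eq_one (gcd_primPart hv0)] at h
  exact Finset.ne_of_mem_erase hy ((isVectorConfig_iff.1 hT).2 (Finset.mem_of_mem_erase hy) hv h)

theorem mem_of_lt (hmin : IsMinimalConfig N T) (hT : IsVectorConfig T) (hN : IsLatticeGauge N)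
    {v w : ℤ × ℤ} (hw : Int.gcd w.1 w.2 = 1) (hv : v ∈ T) (hlt : N w < N v) : w ∈ T := by
  obtain ⟨y, hy, h⟩ := hmin.exists_primPart_eq hT hv (ne_zero_of_gcd_eq_one hw) hlt
  have hyT := Finset.mem_of_mem_erase hy
  rw [primPart_of_gcd_eq_one hw, primPart_of_gcd_eq_one (hmin.gcd_eq_one hT hN hyT)] at h
  exact h ▸ hyT

end IsMinimalConfig

theorem IsLatticeGauge.sum_le_sum_of_forall_lt_mem {N : ℤ × ℤ → ℝ} (hN : IsLatticeGauge N)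
    {T U : Finset (ℤ × ℤ)} (hU : IsVectorConfig U) (hcard : U.card = T.card)
    (hT : ∀ w : ℤ × ℤ, Int.gcd w.1 w.2 = 1 → (∃ v ∈ T, N w < N v) → w ∈ T) :
    ∑ v ∈ T, N v ≤ ∑ u ∈ U, N u := by
  obtain ⟨h0, hinj⟩ := isVectorConfig_iff.1 hU
  have hne : ∀ u ∈ U, u ≠ 0 := fun u hu h => h0 (h ▸ hu)
  calc ∑ v ∈ T, N v ≤ ∑ w ∈ U.image primPart, N w := by
        refine Finset.sum_le_sum_of_card_eq_of_forall_lt_mem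
          (by rw [Finset.card_image_of_injOn hinj, hcard]) fun w hw => ?_
        obtain ⟨u, hu, rfl⟩ := Finset.mem_image.1 hw
        exact hT _ (gcd_primPart (hne u hu))
    _ = ∑ u ∈ U, N (primPart u) := Finset.sum_image hinj
    _ ≤ ∑ u ∈ U, N u := Finset.sum_le_sum fun u hu => hN.apply_primPart_le (hne u hu)

theorem IsLatticeGauge.isMinimalConfig_iff {N : ℤ × ℤ → ℝ} (hN : IsLatticeGauge N)
    {T : Finset (ℤ × ℤ)} (hT : IsVectorConfig T) :
    IsMinimalConfig N T ↔ (∀ v ∈ T, Int.gcd v.1 v.2 = 1) ∧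
      ∀ w : ℤ × ℤ, Int.gcd w.1 w.2 = 1 → (∃ v ∈ T, N w < N v) → w ∈ T :=
  ⟨fun hmin => ⟨fun _ hv => hmin.gcd_eq_one hT hN hv,
      fun _ hw ⟨_, hv, hlt⟩ => hmin.mem_of_lt hT hN hw hv hlt⟩,
    fun ⟨_, hsat⟩ _ hU hcard => hN.sum_le_sum_of_forall_lt_mem hU hcard hsat⟩

theorem stmt9 (k : ℕ) (T : Finset (ℤ × ℤ)) (hT : IsVectorConfig T) (hcard : T.card = k) :
    (∀ U : Finset (ℤ × ℤ), IsVectorConfig U → U.card = k →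
        ∑ v ∈ T, gaugeZ v ≤ ∑ v ∈ U, gaugeZ v) ↔ IsSaturated T := by
  subst hcard
  exact isLatticeGauge_gaugeZ.isMinimalConfig_iff hT
end

section
/- All saturated vector configurations S ⊂ ℤ² of the same cardinality k have the same value of ∑_{v∈S} ‖v‖, namely 3·∑_{l=1}^{q} l·φ(l) + (q+1)·(k − 3∑_{l=1}^{q} φ(l)), where q is the largest natural number with 3∑_{l=1}^{q} φ(l) ≤ k. -/
open Finset Pointwise

section Aux

lemma hull_eq : convexHull ℝ {((1:ℝ),(1:ℝ)), (-1,0), (0,-1)} =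
    {p : ℝ × ℝ | 2*p.2 - p.1 ≤ 1 ∧ 2*p.1 - p.2 ≤ 1 ∧ -p.1 - p.2 ≤ 1} := by
  apply subset_antisymm
  · apply convexHull_min
    · rintro p hp
      simp only [Set.mem_insert_iff, Set.mem_singleton_iff] at hp
      rcases hp with h | h | h <;> subst h <;> norm_num
    · intro p hp q hq a b ha hb hab
      simp only [Set.mem_setOf_eq] at *
      have e1 : (a • p + b • q).1 = a * p.1 + b * q.1 := rfl
      have e2 : (a • p + b • q).2 = a * p.2 + b * q.2 := rfl
      rw [e1, e2]
      refine ⟨?_, ?_, ?_⟩ <;> nlinarith [hp.1, hp.2.1, hp.2.2, hq.1, hq.2.1, hq.2.2]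
  · rintro ⟨x, y⟩ ⟨h1, h2, h3⟩
    simp only [Set.mem_setOf_eq] at h1 h2 h3
    have := centerMass_mem_convexHull (R := ℝ) (E := ℝ × ℝ)
      (s := {((1:ℝ),(1:ℝ)), (-1,0), (0,-1)}) (Finset.univ : Finset (Fin 3))
      (w := ![(1+x+y)/3, (1-2*x+y)/3, (1+x-2*y)/3])
      (z := ![((1:ℝ),(1:ℝ)), (-1,0), (0,-1)]) ?_ ?_ ?_
    · convert this using 1
      rw [Finset.centerMass]
      rw [Fin.sum_univ_three, Fin.sum_univ_three]
      simp only [Matrix.cons_val_zero, Matrix.cons_val_one, Matrix.head_cons,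
        Matrix.cons_val_two, Matrix.tail_cons]
      rw [show (1+x+y)/3 + (1-2*x+y)/3 + (1+x-2*y)/3 = 1 by ring]
      ext <;> simp [Prod.smul_fst, Prod.smul_snd] <;> ring
    · intro i _
      fin_cases i <;> simp <;> linarith
    · rw [Fin.sum_univ_three]
      simp only [Matrix.cons_val_zero, Matrix.cons_val_one, Matrix.head_cons,
        Matrix.cons_val_two, Matrix.tail_cons]
      linarith
    · intro i _
      fin_cases i <;> simp

lemma gauge_eq_max (p : ℝ × ℝ) :
    gauge (convexHull ℝ {((1:ℝ),(1:ℝ)), (-1,0), (0,-1)}) p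
      = max (2*p.2 - p.1) (max (2*p.1 - p.2) (-p.1 - p.2)) := by
  set M := max (2*p.2 - p.1) (max (2*p.1 - p.2) (-p.1 - p.2)) with hM
  have hA : 2*p.2 - p.1 ≤ M := le_max_left _ _
  have hB : 2*p.1 - p.2 ≤ M := le_trans (le_max_left _ _) (le_max_right _ _)
  have hC : -p.1 - p.2 ≤ M := le_trans (le_max_right _ _) (le_max_right _ _)
  have hM0 : 0 ≤ M := by linarith
  have hset : {r : ℝ | r ∈ Set.Ioi 0 ∧ p ∈ r • (convexHull ℝ {((1:ℝ),(1:ℝ)), (-1,0), (0,-1)})}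
      = {r : ℝ | 0 < r ∧ M ≤ r} := by
    ext r
    simp only [Set.mem_setOf_eq, Set.mem_Ioi]
    constructor
    · rintro ⟨hr, hmem⟩
      rw [Set.mem_smul_set_iff_inv_smul_mem₀ (ne_of_gt hr), hull_eq] at hmem
      obtain ⟨c1, c2, c3⟩ := hmem
      simp only [Prod.smul_fst, Prod.smul_snd, smul_eq_mul] at c1 c2 c3
      refine ⟨hr, ?_⟩
      rw [hM]
      have hr' : 0 < r⁻¹ := inv_pos.mpr hr
      have hrr : r * r⁻¹ = 1 := mul_inv_cancel₀ (ne_of_gt hr)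
      refine max_le ?_ (max_le ?_ ?_) <;>
        nlinarith [mul_le_mul_of_nonneg_left c1 hr.le, mul_le_mul_of_nonneg_left c2 hr.le,
          mul_le_mul_of_nonneg_left c3 hr.le, hrr]
    · rintro ⟨hr, hMr⟩
      refine ⟨hr, ?_⟩
      rw [Set.mem_smul_set_iff_inv_smul_mem₀ (ne_of_gt hr), hull_eq]
      have hr' : 0 < r⁻¹ := inv_pos.mpr hr
      have hrr : r⁻¹ * r = 1 := inv_mul_cancel₀ (ne_of_gt hr)
      refine ⟨?_, ?_, ?_⟩ <;>
        simp only [Prod.smul_fst, Prod.smul_snd, smul_eq_mul, Set.mem_setOf_eq] <;>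
        nlinarith
  rw [gauge_def, hset]
  rcases eq_or_lt_of_le hM0 with h0 | h0
  · rw [← h0]
    have : {r : ℝ | 0 < r ∧ (0:ℝ) ≤ r} = Set.Ioi 0 := by
      ext r; simp only [Set.mem_setOf_eq, Set.mem_Ioi]
      exact ⟨fun h => h.1, fun h => ⟨h, le_of_lt h⟩⟩
    rw [this, csInf_Ioi]
  · have : {r : ℝ | 0 < r ∧ M ≤ r} = Set.Ici M := by
      ext r
      simp only [Set.mem_setOf_eq, Set.mem_Ici]
      exact ⟨fun h => h.2, fun h => ⟨lt_of_lt_of_le h0 h, h⟩⟩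
    rw [this, csInf_Ici]

lemma cop1 (l j : ℤ) : Int.gcd (l - 2*j) (l - j) = 1 ↔ Int.gcd l j = 1 := by
  rw [← Int.isCoprime_iff_gcd_eq_one, ← Int.isCoprime_iff_gcd_eq_one]
  constructor <;> rintro ⟨u, v, h⟩
  · exact ⟨u + v, -(2*u + v), by linear_combination h⟩
  · exact ⟨-(u + v), 2*u + v, by linear_combination h⟩

lemma cop2 (l j : ℤ) : Int.gcd (j - l) (-j) = 1 ↔ Int.gcd l j = 1 := by
  rw [← Int.isCoprime_iff_gcd_eq_one, ← Int.isCoprime_iff_gcd_eq_one]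
  constructor <;> rintro ⟨u, v, h⟩
  · exact ⟨-u, u - v, by linear_combination h⟩
  · exact ⟨-u, -(u + v), by linear_combination h⟩

lemma cop3 (l j : ℤ) : Int.gcd j (2*j - l) = 1 ↔ Int.gcd l j = 1 := by
  rw [← Int.isCoprime_iff_gcd_eq_one, ← Int.isCoprime_iff_gcd_eq_one]
  constructor <;> rintro ⟨u, v, h⟩
  · exact ⟨-v, u + 2*v, by linear_combination h⟩
  · exact ⟨2*u + v, -u, by linear_combination h⟩

def fI (v : ℤ × ℤ) : ℤ := max (2*v.2 - v.1) (max (2*v.1 - v.2) (-v.1 - v.2))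

lemma gaugeZ_eq_fI (v : ℤ × ℤ) : gaugeZ v = (fI v : ℝ) := by
  rw [gaugeZ, gauge_eq_max]
  simp only [fI]
  push_cast
  rfl

lemma fI_eq_iff (v : ℤ × ℤ) (m : ℤ) : fI v = m ↔
    ((2*v.2 - v.1 ≤ m ∧ 2*v.1 - v.2 ≤ m ∧ -v.1 - v.2 ≤ m) ∧
      (m ≤ 2*v.2 - v.1 ∨ m ≤ 2*v.1 - v.2 ∨ m ≤ -v.1 - v.2)) := by
  rw [le_antisymm_iff]
  simp [fI, max_le_iff, le_max_iff, and_assoc]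

lemma fI_pos {v : ℤ × ℤ} (h : Int.gcd v.1 v.2 = 1) : 1 ≤ fI v := by
  obtain ⟨x, y⟩ := v
  by_contra h'
  push_neg at h'
  simp only [fI, max_le_iff] at h'
  have h1 : 2*y - x ≤ 0 := by omega
  have h2 : 2*x - y ≤ 0 := by omega
  have h3 : -x - y ≤ 0 := by omega
  have hx : x = 0 := by omega
  have hy : y = 0 := by omega
  subst hx hy
  simp [Int.gcd] at h

def e1 (l j : ℕ) : ℤ × ℤ := ((l:ℤ) - 2*j, (l:ℤ) - j)
def e2 (l j : ℕ) : ℤ × ℤ := ((j:ℤ) - l, -(j:ℤ))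
def e3 (l j : ℕ) : ℤ × ℤ := ((j:ℤ), 2*j - (l:ℤ))

def edges (l : ℕ) : Finset (ℤ × ℤ) :=
  ((range l).filter l.Coprime).image (e1 l) ∪
    ((range l).filter l.Coprime).image (e2 l) ∪
    ((range l).filter l.Coprime).image (e3 l)

lemma coprime_iff_int (l j : ℕ) : l.Coprime j ↔ Int.gcd (l:ℤ) (j:ℤ) = 1 := by
  rw [Int.gcd_natCast_natCast]

lemma mem_edges {l : ℕ} (hl : 1 ≤ l) (v : ℤ × ℤ) :
    v ∈ edges l ↔ Int.gcd v.1 v.2 = 1 ∧ fI v = l := by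
  constructor
  · intro hv
    simp only [edges, mem_union, mem_image, mem_filter, mem_range] at hv
    rcases hv with (⟨j, ⟨hj, hcop⟩, rfl⟩ | ⟨j, ⟨hj, hcop⟩, rfl⟩) | ⟨j, ⟨hj, hcop⟩, rfl⟩
    · refine ⟨(cop1 l j).mpr ((coprime_iff_int l j).mp hcop), ?_⟩
      rw [fI_eq_iff]
      simp only [e1]
      omega
    · refine ⟨(cop2 l j).mpr ((coprime_iff_int l j).mp hcop), ?_⟩
      rw [fI_eq_iff]
      simp only [e2]
      omega
    · refine ⟨(cop3 l j).mpr ((coprime_iff_int l j).mp hcop), ?_⟩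
      rw [fI_eq_iff]
      simp only [e3]
      omega
  · rintro ⟨hg, hf⟩
    obtain ⟨x, y⟩ := v
    rw [fI_eq_iff] at hf
    simp only at hf hg
    obtain ⟨⟨hA, hB, hC⟩, heq⟩ := hf
    simp only [edges, mem_union, mem_image, mem_filter, mem_range]
    by_cases hAe : 2*y - x = (l:ℤ)
    · by_cases hy : 1 ≤ y
      · left; left
        refine ⟨(l - y).toNat, ⟨by omega, ?_⟩, ?_⟩
        · rw [coprime_iff_int, Int.toNat_of_nonneg (by omega)]
          have : Int.gcd l (l - y) = 1 := by
            have hx : x = 2*y - l := by omega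
            subst hx
            rw [← cop1 l (l - y)] at *
            convert hg using 2 <;> ring
          exact this
        · simp only [e1, Int.toNat_of_nonneg (show (0:ℤ) ≤ l - y by omega)]
          have hx : x = 2*y - l := by omega
          subst hx
          simp only [Prod.mk.injEq]
          omega
      · have hy0 : y = 0 := by omega
        have hx : x = -(l:ℤ) := by omega
        have hl1 : l = 1 := by
          have h' : Int.gcd x y = l := by rw [hx, hy0]; simp [Int.gcd]
          rw [h'] at hg; exact hg
        left; right
        exact ⟨0, ⟨by omega, by simp [Nat.Coprime, hl1]⟩, by simp [e2, hx, hy0]⟩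
    · by_cases hBe : 2*x - y = (l:ℤ)
      · right
        refine ⟨x.toNat, ⟨by omega, ?_⟩, ?_⟩
        · rw [coprime_iff_int, Int.toNat_of_nonneg (by omega)]
          have hy : y = 2*x - l := by omega
          subst hy
          rw [← cop3 l x] at *
          convert hg using 2
        · simp only [e3, Int.toNat_of_nonneg (show (0:ℤ) ≤ x by omega), Prod.mk.injEq]
          exact ⟨trivial, by omega⟩
      · have hCe : -x - y = (l:ℤ) := by omega
        left; right
        refine ⟨(-y).toNat, ⟨by omega, ?_⟩, ?_⟩
        · rw [coprime_iff_int, Int.toNat_of_nonneg (by omega)]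
          have hx : x = -l - y := by omega
          subst hx
          have : Int.gcd l (-y) = 1 := by
            rw [← cop2 l (-y)] at *
            convert hg using 2 <;> ring
          exact this
        · simp only [e2, Int.toNat_of_nonneg (show (0:ℤ) ≤ -y by omega), Prod.mk.injEq]
          omega

lemma card_edges {l : ℕ} (hl : 1 ≤ l) : (edges l).card = 3 * l.totient := by
  have hφ : ((range l).filter l.Coprime).card = l.totient :=
    (Nat.totient_eq_card_coprime l).symm
  have inj1 : Set.InjOn (e1 l) ((range l).filter l.Coprime) := by
    intro a _ b _ h
    have := congrArg Prod.snd h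
    simp only [e1] at this
    omega
  have inj2 : Set.InjOn (e2 l) ((range l).filter l.Coprime) := by
    intro a _ b _ h
    have := congrArg Prod.snd h
    simp only [e2] at this
    omega
  have inj3 : Set.InjOn (e3 l) ((range l).filter l.Coprime) := by
    intro a _ b _ h
    have := congrArg Prod.fst h
    simp only [e3] at this
    omega
  have d12 : Disjoint (((range l).filter l.Coprime).image (e1 l))
      (((range l).filter l.Coprime).image (e2 l)) := by
    rw [Finset.disjoint_left]
    rintro v hv1 hv2
    simp only [mem_image, mem_filter, mem_range] at hv1 hv2
    obtain ⟨a, ⟨ha, _⟩, rfl⟩ := hv1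
    obtain ⟨b, ⟨hb, _⟩, heq⟩ := hv2
    have h2 := congrArg Prod.snd heq
    simp only [e1, e2] at h2
    omega
  have d13 : Disjoint (((range l).filter l.Coprime).image (e1 l))
      (((range l).filter l.Coprime).image (e3 l)) := by
    rw [Finset.disjoint_left]
    rintro v hv1 hv2
    simp only [mem_image, mem_filter, mem_range] at hv1 hv2
    obtain ⟨a, ⟨ha, _⟩, rfl⟩ := hv1
    obtain ⟨b, ⟨hb, _⟩, heq⟩ := hv2
    have h1 := congrArg Prod.fst heq
    have h2 := congrArg Prod.snd heq
    simp only [e1, e3] at h1 h2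
    omega
  have d23 : Disjoint (((range l).filter l.Coprime).image (e2 l))
      (((range l).filter l.Coprime).image (e3 l)) := by
    rw [Finset.disjoint_left]
    rintro v hv1 hv2
    simp only [mem_image, mem_filter, mem_range] at hv1 hv2
    obtain ⟨a, ⟨ha, _⟩, rfl⟩ := hv1
    obtain ⟨b, ⟨hb, _⟩, heq⟩ := hv2
    have h1 := congrArg Prod.fst heq
    simp only [e2, e3] at h1
    omega
  rw [edges, Finset.card_union_of_disjoint, Finset.card_union_of_disjoint d12,
    Finset.card_image_of_injOn inj1, Finset.card_image_of_injOn inj2,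
    Finset.card_image_of_injOn inj3, hφ]
  · ring
  · rw [Finset.disjoint_union_left]
    exact ⟨d13, d23⟩

lemma edges_disjoint {i j : ℕ} (hi : 1 ≤ i) (hj : 1 ≤ j) (hij : i ≠ j) :
    Disjoint (edges i) (edges j) := by
  rw [Finset.disjoint_left]
  intro v h1 h2
  have ha := ((mem_edges hi v).mp h1).2
  have hb := ((mem_edges hj v).mp h2).2
  omega

end Aux

theorem stmt10 (k q : ℕ) (S : Finset (ℤ × ℤ)) (hS : IsSaturated S) (hcard : S.card = k)
    (hq : 3 * ∑ l ∈ Finset.Icc 1 q, Nat.totient l ≤ k)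
    (hq' : ∀ q' : ℕ, 3 * ∑ l ∈ Finset.Icc 1 q', Nat.totient l ≤ k → q' ≤ q) :
    ∑ v ∈ S, gaugeZ v =
      3 * ∑ l ∈ Finset.Icc 1 q, (l : ℝ) * Nat.totient l +
        (q + 1 : ℝ) * ((k : ℝ) - 3 * ∑ l ∈ Finset.Icc 1 q, (Nat.totient l : ℝ)) := by
  obtain ⟨hprim, hsat⟩ := hS
  have totient_ge : ∀ t : ℕ, t ≤ ∑ l ∈ Icc 1 t, Nat.totient l := by
    intro t
    have h := Finset.card_nsmul_le_sum (Icc 1 t) Nat.totient 1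
      (fun x hx => Nat.totient_pos.mpr (by simp only [mem_Icc] at hx; omega))
    simpa using h
  rcases S.eq_empty_or_nonempty with rfl | hne
  · simp only [Finset.card_empty] at hcard
    obtain rfl : k = 0 := hcard.symm
    have hq0 : q = 0 := by
      by_contra h
      have := totient_ge q
      omega
    subst hq0
    simp
  · set imS := S.image fI with himS
    have himne : imS.Nonempty := hne.image fI
    set M := imS.max' himne with hM
    obtain ⟨v0, hv0S, hv0⟩ := Finset.mem_image.mp (imS.max'_mem himne)
    have hfIle : ∀ v ∈ S, fI v ≤ M := fun v hv =>
      Finset.le_max' _ _ (Finset.mem_image_of_mem _ hv)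
    have hM1 : 1 ≤ M := le_trans (fI_pos (hprim v0 hv0S)) (le_of_eq hv0)
    set m := M.toNat with hm
    have hmM : (m:ℤ) = M := Int.toNat_of_nonneg (by omega)
    have hm1 : 1 ≤ m := by omega
    have key1 : ∀ w : ℤ × ℤ, Int.gcd w.1 w.2 = 1 → fI w < M → w ∈ S := by
      intro w hw hlt
      exact hsat w hw ⟨v0, hv0S, by
        rw [gaugeZ_eq_fI, gaugeZ_eq_fI, hv0]; exact_mod_cast hlt⟩
    set Low := (Icc 1 (m-1)).biUnion edges with hLow
    have hmemLow : ∀ v : ℤ × ℤ, v ∈ Low ↔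
        (Int.gcd v.1 v.2 = 1 ∧ 1 ≤ fI v ∧ fI v ≤ (m:ℤ) - 1) := by
      intro v
      simp only [hLow, mem_biUnion, mem_Icc]
      constructor
      · rintro ⟨j, ⟨hj1, hj2⟩, hv⟩
        obtain ⟨hg, hf⟩ := (mem_edges hj1 v).mp hv
        exact ⟨hg, by omega, by omega⟩
      · rintro ⟨hg, h1, h2⟩
        refine ⟨(fI v).toNat, ⟨by omega, by omega⟩, ?_⟩
        rw [mem_edges (by omega : 1 ≤ (fI v).toNat)]
        exact ⟨hg, by omega⟩
    have hLowS : Low ⊆ S := by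
      intro v hv
      obtain ⟨hg, h1, h2⟩ := (hmemLow v).mp hv
      exact key1 v hg (by omega)
    set T := S \ Low with hT
    have hTmem : ∀ v ∈ T, fI v = M := by
      intro v hv
      rw [hT, mem_sdiff] at hv
      obtain ⟨hvS, hvL⟩ := hv
      by_contra hne'
      have hlt : fI v < M := lt_of_le_of_ne (hfIle v hvS) hne'
      exact hvL ((hmemLow v).mpr ⟨hprim v hvS, fI_pos (hprim v hvS), by omega⟩)
    have hTedges : T ⊆ edges m := by
      intro v hv
      rw [mem_edges hm1]
      have hvS : v ∈ S := (mem_sdiff.mp hv).1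
      exact ⟨hprim v hvS, by rw [hTmem v hv, hmM]⟩
    have hv0T : v0 ∈ T := by
      rw [hT, mem_sdiff]
      refine ⟨hv0S, fun hc => ?_⟩
      obtain ⟨_, _, h2⟩ := (hmemLow v0).mp hc
      omega
    have hdisj : ∀ i ∈ Icc 1 (m-1), ∀ j ∈ Icc 1 (m-1), i ≠ j →
        Disjoint (edges i) (edges j) := by
      intro i hi j hj hij
      simp only [mem_Icc] at hi hj
      exact edges_disjoint hi.1 hj.1 hij
    have cardLow : Low.card = 3 * ∑ l ∈ Icc 1 (m-1), Nat.totient l := by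
      rw [hLow, Finset.card_biUnion hdisj, Finset.mul_sum]
      apply Finset.sum_congr rfl
      intro j hj
      simp only [mem_Icc] at hj
      exact card_edges hj.1
    have cardsplit : Low.card + T.card = k := by
      have h1 : Low.card ≤ S.card := Finset.card_le_card hLowS
      rw [hT, Finset.card_sdiff_of_subset hLowS]
      omega
    set r := T.card with hr
    have hrle : r ≤ 3 * Nat.totient m := by
      have := Finset.card_le_card hTedges
      rw [card_edges hm1] at this
      exact this
    have hr1 : 1 ≤ r := Finset.card_pos.mpr ⟨v0, hv0T⟩
    have sumLow : ∑ v ∈ Low, gaugeZ v = 3 * ∑ l ∈ Icc 1 (m-1), (l:ℝ) * Nat.totient l := by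
      rw [hLow, Finset.sum_biUnion (fun i hi j hj hij =>
        hdisj i (by simpa using hi) j (by simpa using hj) hij), Finset.mul_sum]
      apply Finset.sum_congr rfl
      intro j hj
      simp only [mem_Icc] at hj
      have hval : ∀ v ∈ edges j, gaugeZ v = (j:ℝ) := by
        intro v hv
        rw [gaugeZ_eq_fI, ((mem_edges hj.1 v).mp hv).2]
        simp
      rw [Finset.sum_congr rfl hval, Finset.sum_const, card_edges hj.1]
      push_cast
      ring
    have sumT : ∑ v ∈ T, gaugeZ v = (r:ℝ) * (m:ℝ) := by
      have hval : ∀ v ∈ T, gaugeZ v = (m:ℝ) := by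
        intro v hv
        rw [gaugeZ_eq_fI, hTmem v hv, ← hmM]
        simp
      rw [Finset.sum_congr rfl hval, Finset.sum_const, ← hr, nsmul_eq_mul]
    have sumS : ∑ v ∈ S, gaugeZ v =
        3 * (∑ l ∈ Icc 1 (m-1), (l:ℝ) * Nat.totient l) + (r:ℝ) * (m:ℝ) := by
      rw [← Finset.sum_sdiff hLowS, ← hT, sumT, sumLow]
      ring
    have hFmono : ∀ a b : ℕ, a ≤ b →
        (∑ l ∈ Icc 1 a, Nat.totient l) ≤ ∑ l ∈ Icc 1 b, Nat.totient l := by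
      intro a b hab
      exact Finset.sum_le_sum_of_subset (Finset.Icc_subset_Icc le_rfl hab)
    have hkeq : k = 3 * (∑ l ∈ Icc 1 (m-1), Nat.totient l) + r := by omega
    have hql : m - 1 ≤ q := hq' (m-1) (by omega)
    have hstep : ∀ f : ℕ → ℕ, ∑ l ∈ Icc 1 m, f l = (∑ l ∈ Icc 1 (m-1), f l) + f m := by
      intro f
      conv_lhs => rw [show m = (m-1)+1 from by omega]
      rw [Finset.sum_Icc_succ_top (by omega), show m - 1 + 1 = m from by omega]
    have hstepR : ∀ f : ℕ → ℝ, ∑ l ∈ Icc 1 m, f l = (∑ l ∈ Icc 1 (m-1), f l) + f m := by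
      intro f
      conv_lhs => rw [show m = (m-1)+1 from by omega]
      rw [Finset.sum_Icc_succ_top (by omega), show m - 1 + 1 = m from by omega]
    have hFm : ∑ l ∈ Icc 1 m, Nat.totient l
        = (∑ l ∈ Icc 1 (m-1), Nat.totient l) + Nat.totient m := hstep _
    have hqu : q ≤ m := by
      by_contra hqm
      push_neg at hqm
      have h1 : (∑ l ∈ Icc 1 (m+1), Nat.totient l) ≤ ∑ l ∈ Icc 1 q, Nat.totient l :=
        hFmono (m+1) q (by omega)
      have h2 : ∑ l ∈ Icc 1 (m+1), Nat.totient l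
          = (∑ l ∈ Icc 1 m, Nat.totient l) + Nat.totient (m+1) :=
        Finset.sum_Icc_succ_top (by omega) _
      have h3 : 1 ≤ Nat.totient (m+1) := Nat.totient_pos.mpr (by omega)
      omega
    have hkR : (k:ℝ) = 3 * (∑ l ∈ Icc 1 (m-1), (Nat.totient l : ℝ)) + (r:ℝ) := by
      exact_mod_cast congrArg (Nat.cast (R := ℝ)) hkeq
    rcases (show q = m - 1 ∨ q = m by omega) with hcase | hcase
    · subst hcase
      rw [sumS, hkR]
      have hmcast : ((m - 1 : ℕ) : ℝ) = (m:ℝ) - 1 := by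
        push_cast [Nat.cast_sub hm1]
        ring
      rw [hmcast]
      ring
    · subst hcase
      have hkval : k = 3 * ∑ l ∈ Icc 1 m, Nat.totient l := by omega
      have hrval : r = 3 * Nat.totient m := by omega
      have hkRm : (k:ℝ) = 3 * ∑ l ∈ Icc 1 m, (Nat.totient l : ℝ) := by
        exact_mod_cast congrArg (Nat.cast (R := ℝ)) hkval
      have hrRm : (r:ℝ) = 3 * (Nat.totient m : ℝ) := by
        exact_mod_cast congrArg (Nat.cast (R := ℝ)) hrval
      rw [sumS, hkRm, hrRm,
        hstepR (fun l => (l:ℝ) * (Nat.totient l : ℝ)),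
        hstepR (fun l => (Nat.totient l : ℝ))]
      ring
end

section
/- Let S_{≤q} = {v ∈ ℤ² : v primitive, ‖v‖ ≤ q} where ‖·‖ is the gauge of K = conv{(1,1),(-1,0),(0,-1)}. Then S_{≤q} is balanced: ∑_{v ∈ S_{≤q}} v = 0. -/
/-!
The lattice map `ρ (x, y) = (-y, x - y)` has order three, permutes the vertices of the triangle `K`
and has determinant one. Hence it preserves both the gauge of `K` and primitivity, so it permutes
`S_{≤q}`, and the sum of `S_{≤q}` is a fixed vector of `ρ`. The only fixed vector of `ρ` is `0`.
-/

open Pointwise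

theorem gauge_image_linearEquiv {E F : Type*} [AddCommGroup E] [Module ℝ E] [AddCommGroup F]
    [Module ℝ F] (e : E ≃ₗ[ℝ] F) (s : Set E) (x : E) : gauge (e '' s) (e x) = gauge s x := by
  simp only [gauge_def, ← image_smul_set, e.injective.mem_set_image]

theorem AddEquiv.map_sum_id_of_apply_mem_iff {M : Type*} [AddCommMonoid M] (e : M ≃+ M)
    {S : Finset M} (hS : ∀ v, e v ∈ S ↔ v ∈ S) : e (∑ v ∈ S, v) = ∑ v ∈ S, v := by
  rw [map_sum]
  exact Finset.sum_equiv e.toEquiv (fun v => (hS v).symm) (fun _ _ => rfl)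

def rotationOrderThree (R : Type*) [CommRing R] : (R × R) ≃ₗ[R] R × R where
  toFun v := (-v.2, v.1 - v.2)
  invFun v := (v.2 - v.1, -v.1)
  map_add' v w := by ext <;> simp <;> abel
  map_smul' c v := by ext <;> simp [mul_sub]
  left_inv v := by ext <;> simp
  right_inv v := by ext <;> simp

@[simp]
theorem rotationOrderThree_apply {R : Type*} [CommRing R] (v : R × R) :
    rotationOrderThree R v = (-v.2, v.1 - v.2) :=
  rfl

theorem rotationOrderThree_eq_self_iff (v : ℤ × ℤ) : rotationOrderThree ℤ v = v ↔ v = 0 := by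
  obtain ⟨x, y⟩ := v
  simp only [rotationOrderThree_apply, Prod.ext_iff, Prod.fst_zero, Prod.snd_zero]
  omega

theorem image_rotationOrderThree_convexHull_triangle :
    rotationOrderThree ℝ '' convexHull ℝ {((1:ℝ),(1:ℝ)), (-1,0), (0,-1)} =
      convexHull ℝ {((1:ℝ),(1:ℝ)), (-1,0), (0,-1)} := by
  rw [← LinearEquiv.coe_toLinearMap, LinearMap.image_convexHull]
  congr 1
  simp only [LinearEquiv.coe_coe, Set.image_insert_eq, Set.image_singleton,
    rotationOrderThree_apply]
  norm_num
  ext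
  simp only [Set.mem_insert_iff, Set.mem_singleton_iff]
  tauto

theorem gaugeZ_rotationOrderThree (v : ℤ × ℤ) : gaugeZ (rotationOrderThree ℤ v) = gaugeZ v := by
  unfold gaugeZ
  conv_rhs => rw [← gauge_image_linearEquiv (rotationOrderThree ℝ),
    image_rotationOrderThree_convexHull_triangle]
  simp

theorem stmt11 (q : ℕ) (S : Finset (ℤ × ℤ))
    (hS : ∀ v : ℤ × ℤ, v ∈ S ↔ (Int.gcd v.1 v.2 = 1 ∧ gaugeZ v ≤ (q : ℝ))) :
    ∑ v ∈ S, v = 0 := by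
  have hS_rotation : ∀ v, rotationOrderThree ℤ v ∈ S ↔ v ∈ S := fun v => by
    rw [hS, hS, gaugeZ_rotationOrderThree, rotationOrderThree_apply, Int.neg_gcd,
      Int.gcd_sub_self_right, Int.gcd_comm]
  exact (rotationOrderThree_eq_self_iff _).1
    ((rotationOrderThree ℤ).toAddEquiv.map_sum_id_of_apply_mem_iff hS_rotation)
end

section
/- Given a convex lattice polygon P ⊂ ℝ² with at least 2 vertices, there exists a convex lattice polygon P' ⊆ P with the same number of vertices such that every lattice point on the boundary of P' is a vertex of P'. -/
/-!
Induct on the number of lattice points of the polygon `P`. If a boundary lattice point `p` is not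
a vertex, take a supporting line `f = f p` of `P` through `p`. In the plane the vertices of `P` on
it are collinear extreme points, hence at most two; exchange one of them, `b`, for `p`. The new
polygon still has `p` as a vertex, because the only vertex of `P` left on the supporting line is
the other one, so it has as many vertices as `P`; and it misses the lattice point `b`.
-/

/-- Embedding of lattice points into the plane. -/
def latpt (p : ℤ × ℤ) : ℝ × ℝ := ((p.1 : ℝ), (p.2 : ℝ))

open Set Module Filter

section Convex

variable {𝕜 E : Type*} [Field 𝕜] [LinearOrder 𝕜] [AddCommGroup E] [Module 𝕜 E]

theorem Set.Subsingleton.convexHull_eq {s : Set E} (hs : s.Subsingleton) :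
    convexHull 𝕜 s = s := by
  rcases hs.eq_empty_or_singleton with rfl | ⟨a, rfl⟩ <;> simp

variable [IsStrictOrderedRing 𝕜]

theorem mem_convexHull_sep_of_forall_le {s : Set E} {f : E →ₗ[𝕜] 𝕜} {c : 𝕜} {x : E}
    (hs : ∀ y ∈ s, f y ≤ c) (hx : x ∈ convexHull 𝕜 s) (hfx : f x = c) :
    x ∈ convexHull 𝕜 {y ∈ s | f y = c} := by
  set s₁ := {y ∈ s | f y = c}
  set s₂ := {y ∈ s | f y < c}
  have hs₁₂ : s = s₁ ∪ s₂ := by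
    ext y
    simp only [s₁, s₂, mem_union, mem_ofPred_eq, ← and_or_left]
    exact ⟨fun hy => ⟨hy, (hs y hy).eq_or_lt⟩, And.left⟩
  have hlt : ∀ z ∈ convexHull 𝕜 s₂, f z < c :=
    convexHull_min (fun z hz => hz.2) (convex_halfSpace_lt f.isLinear c)
  rcases s₂.eq_empty_or_nonempty with h₂ | h₂
  · rwa [hs₁₂, h₂, union_empty] at hx
  rcases s₁.eq_empty_or_nonempty with h₁ | h₁
  · rw [hs₁₂, h₁, empty_union] at hx
    exact absurd hfx (hlt x hx).ne
  rw [hs₁₂, convexHull_union h₁ h₂, mem_convexJoin] at hx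
  obtain ⟨y, hy, z, hz, a, b, ha, hb, hab, rfl⟩ := hx
  have hfy : f y = c := convexHull_min (fun y hy => hy.2) (convex_hyperplane f.isLinear c) hy
  have hb0 : b = 0 := by
    have hfz := hlt z hz
    rw [map_add, map_smul, map_smul, hfy, smul_eq_mul, smul_eq_mul] at hfx
    have : b * (c - f z) = 0 := by linear_combination c * hab - hfx
    exact (mul_eq_zero.1 this).resolve_right (sub_pos.2 hfz).ne'
  rwa [hb0, zero_smul, add_zero, (by linarith : a = 1), one_smul]

theorem ncard_le_two_of_collinear_of_subset_extremePoints {A S : Set E}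
    (hS : S ⊆ A.extremePoints 𝕜) (hcol : Collinear 𝕜 S) : S.ncard ≤ 2 := by
  by_contra! h
  obtain ⟨a, b, c, ha, hb, hc, hab, hac, hbc⟩ :=
    (two_lt_ncard_iff (finite_of_ncard_pos (by omega))).1 h
  have hmid : ∀ {x y z}, x ∈ S → y ∈ S → z ∈ S → Wbtw 𝕜 x y z → x = y ∨ z = y :=
    fun hx hy hz hxyz => ((mem_extremePoints_iff_forall_segment.1 (hS hy)).2 _
      (extremePoints_subset (hS hx)) _ (extremePoints_subset (hS hz)) hxyz.mem_segment)
  rcases (hcol.subset (insert_subset ha (pair_subset hb hc))).wbtw_or_wbtw_or_wbtw with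
    h | h | h
  · rcases hmid ha hb hc h with h | h <;> simp_all
  · rcases hmid hb hc ha h with h | h <;> simp_all
  · rcases hmid hc ha hb h with h | h <;> simp_all

end Convex

section Plane

variable {E : Type*} [NormedAddCommGroup E] [NormedSpace ℝ E]

theorem Set.Finite.convexHull_extremePoints_convexHull {s : Set E} (hs : s.Finite) :
    convexHull ℝ ((convexHull ℝ s).extremePoints ℝ) = convexHull ℝ s := by
  have hext : ((convexHull ℝ s).extremePoints ℝ).Finite :=
    hs.subset extremePoints_convexHull_subset
  rw [← (hext.isClosed_convexHull ℝ).closure_eq]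
  exact closure_convexHull_extremePoints (hs.isCompact_convexHull ℝ) (convex_convexHull ℝ s)

variable [FiniteDimensional ℝ E]

theorem Convex.collinear_of_interior_eq_empty (hE : finrank ℝ E = 2) {s : Set E}
    (hs : Convex ℝ s) (h : interior s = ∅) : Collinear ℝ s := by
  rcases s.eq_empty_or_nonempty with rfl | hne
  · exact collinear_empty ℝ _
  have hspan : vectorSpan ℝ s ≠ ⊤ := by
    rw [← direction_affineSpan, Ne,
      AffineSubspace.direction_eq_top_iff_of_nonempty (hne.mono (subset_affineSpan ℝ s)),
      ← hs.interior_nonempty_iff_affineSpan_eq_top, h]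
    exact not_nonempty_empty
  have := Submodule.finrank_lt hspan
  rw [collinear_iff_finrank_le_one]
  omega

theorem Convex.exists_forall_le_collinear (hE : finrank ℝ E = 2) {P : Set E}
    (hP : Convex ℝ P) {x : E} (hx : x ∉ interior P) :
    ∃ f : StrongDual ℝ E, (∀ y ∈ P, f y ≤ f x) ∧ Collinear ℝ {y ∈ P | f y = f x} := by
  suffices ∃ f : StrongDual ℝ E, (∀ y ∈ P, f y ≤ f x) ∧ interior {y ∈ P | f y = f x} = ∅ by
    obtain ⟨f, hf, hint⟩ := this
    have hface : Convex ℝ {y ∈ P | f y = f x} :=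
      hP.inter (convex_hyperplane f.toLinearMap.isLinear (f x))
    exact ⟨f, hf, hface.collinear_of_interior_eq_empty hE hint⟩
  by_cases hP' : (interior P).Nonempty
  · obtain ⟨f, hf0, hf⟩ := geometric_hahn_banach_of_nonempty_interior_point hP hx hP'
    refine ⟨f, hf, subset_empty_iff.1 ?_⟩
    calc interior {y ∈ P | f y = f x} ⊆ interior (f ⁻¹' {f x}) := interior_mono fun y hy => hy.2
      _ = f ⁻¹' interior {f x} :=
        ((f.isOpenMap_of_ne_zero hf0).preimage_interior_eq_interior_preimage f.continuous _).symm
      _ = ∅ := by rw [interior_singleton, preimage_empty]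
  · exact ⟨0, by simp, subset_empty_iff.1 <|
      (interior_mono (sep_subset _ _)).trans (not_nonempty_iff_eq_empty.1 hP').subset⟩

theorem exists_extremePoints_convexHull_insert_sdiff (hE : finrank ℝ E = 2) {s : Set E}
    (hs : s.Finite) {x : E} (hxP : x ∈ convexHull ℝ s) (hxi : x ∉ interior (convexHull ℝ s))
    (hxe : x ∉ (convexHull ℝ s).extremePoints ℝ) :
    ∃ b ∈ (convexHull ℝ s).extremePoints ℝ,
      (convexHull ℝ (insert x ((convexHull ℝ s).extremePoints ℝ \ {b}))).extremePoints ℝ =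
        insert x ((convexHull ℝ s).extremePoints ℝ \ {b}) := by
  set V := (convexHull ℝ s).extremePoints ℝ
  have hV : V.Finite := hs.subset extremePoints_convexHull_subset
  obtain ⟨f, hf, hcol⟩ := (convex_convexHull ℝ s).exists_forall_le_collinear hE hxi
  have hface : ∀ {T}, T ⊆ V → x ∈ convexHull ℝ T → x ∈ convexHull ℝ {y ∈ T | f y = f x} :=
    fun hTV hxT => mem_convexHull_sep_of_forall_le (f := f.toLinearMap)
      (fun y hy => hf y (extremePoints_subset (hTV hy))) hxT rfl
  set S := {y ∈ V | f y = f x}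
  have hS : S.ncard ≤ 2 := ncard_le_two_of_collinear_of_subset_extremePoints (sep_subset _ _)
    (hcol.subset fun y hy => by exact ⟨extremePoints_subset hy.1, hy.2⟩)
  have hxS : x ∈ convexHull ℝ S :=
    hface subset_rfl (hs.convexHull_extremePoints_convexHull ▸ hxP)
  obtain ⟨b, hb⟩ : S.Nonempty := convexHull_nonempty_iff.1 ⟨x, hxS⟩
  set T := insert x (V \ {b})
  have hTP : convexHull ℝ T ⊆ convexHull ℝ s :=
    convexHull_min (insert_subset hxP (sdiff_subset.trans extremePoints_subset))
      (convex_convexHull ℝ s)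
  refine ⟨b, hb.1, extremePoints_convexHull_subset.antisymm (insert_subset ?_ fun y hy =>
    inter_extremePoints_subset_extremePoints_of_subset hTP
      ⟨subset_convexHull ℝ _ (mem_insert_of_mem _ hy), hy.1⟩)⟩
  -- Otherwise `x ∈ conv (V \ {b})`, whose points on the line `f = f x` lie in `conv (S \ {b})`,
  -- and `S \ {b}` is at most one vertex.
  by_contra hxT
  have hxVb : x ∈ convexHull ℝ (V \ {b}) := by
    have hxQ : x ∈ convexHull ℝ ((convexHull ℝ T).extremePoints ℝ) := by
      rw [(hV.sdiff.insert x).convexHull_extremePoints_convexHull]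
      exact subset_convexHull ℝ T (mem_insert x _)
    refine convexHull_mono (fun y hy => ?_) hxQ
    exact (extremePoints_convexHull_subset hy).resolve_left (ne_of_mem_of_not_mem hy hxT)
  have hSb : (S \ {b}).Subsingleton := by
    have hSfin : S.Finite := hV.subset (sep_subset _ _)
    refine (ncard_le_one hSfin.sdiff).1 ?_
    rw [ncard_sdiff_singleton_of_mem hb]
    omega
  have hxSb := hface sdiff_subset hxVb
  rw [(hSb.anti fun y hy => ⟨⟨hy.1.1, hy.2⟩, hy.1.2⟩).convexHull_eq] at hxSb
  exact hxe hxSb.1.1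

end Plane

section Lattice

theorem latpt_injective : Function.Injective latpt := fun p q h => by
  simpa [latpt, Prod.ext_iff] using h

theorem finite_preimage_latpt {K : Set (ℝ × ℝ)} (hK : IsCompact K) : (latpt ⁻¹' K).Finite := by
  refine tendsto_cofinite_cocompact_iff.1 ?_ K hK
  rw [← coprod_cofinite, ← coprod_cocompact]
  exact Int.tendsto_coe_cofinite.prodMap_coprod Int.tendsto_coe_cofinite

theorem exists_finset_image_latpt_eq {T : Set (ℝ × ℝ)} (hT : T.Finite) (hTZ : T ⊆ range latpt) :
    ∃ W : Finset (ℤ × ℤ), latpt '' W = T :=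
  ⟨(hT.preimage latpt_injective.injOn).toFinset, by
    rw [Finite.coe_toFinset, image_preimage_eq_of_subset hTZ]⟩

def latticePolygon (V : Finset (ℤ × ℤ)) : Set (ℝ × ℝ) := convexHull ℝ (latpt '' V)

theorem exists_latticePolygon_fewer_latticePoints (V : Finset (ℤ × ℤ)) {p : ℤ × ℤ}
    (hpf : latpt p ∈ frontier (latticePolygon V))
    (hpe : latpt p ∉ (latticePolygon V).extremePoints ℝ) :
    ∃ W : Finset (ℤ × ℤ), latticePolygon W ⊆ latticePolygon V ∧
      ((latticePolygon W).extremePoints ℝ).ncard = ((latticePolygon V).extremePoints ℝ).ncard ∧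
      (latpt ⁻¹' latticePolygon W).ncard < (latpt ⁻¹' latticePolygon V).ncard := by
  unfold latticePolygon at hpf hpe ⊢
  set P := convexHull ℝ (latpt '' (V : Set (ℤ × ℤ)))
  have hV : (latpt '' V).Finite := V.finite_toSet.image _
  have hpP : latpt p ∈ P :=
    frontier_subset_iff_isClosed.2 (hV.isClosed_convexHull ℝ) hpf
  have hplane : finrank ℝ (ℝ × ℝ) = 2 := by simp
  obtain ⟨b, hb, hext⟩ := exists_extremePoints_convexHull_insert_sdiff hplane hV hpP hpf.2 hpe
  set T := insert (latpt p) (P.extremePoints ℝ \ {b})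
  have hTP : convexHull ℝ T ⊆ P :=
    convexHull_min (insert_subset hpP (sdiff_subset.trans extremePoints_subset))
      (convex_convexHull ℝ _)
  obtain ⟨W, hW⟩ := exists_finset_image_latpt_eq (T := T)
    ((hV.subset extremePoints_convexHull_subset).sdiff.insert _)
    (insert_subset (mem_range_self p)
      (sdiff_subset.trans (extremePoints_convexHull_subset.trans (image_subset_range _ _))))
  obtain ⟨q, -, rfl⟩ := extremePoints_convexHull_subset hb
  have hqT : latpt q ∉ convexHull ℝ T := fun hq => by
    have := inter_extremePoints_subset_extremePoints_of_subset hTP ⟨hq, hb⟩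
    rw [hext] at this
    rcases this with h | h
    · exact hpe (h ▸ hb)
    · exact h.2 rfl
  refine ⟨W, ?_, ?_, ?_⟩
  · rwa [hW]
  · rw [hW, hext, ncard_exchange hpe hb]
  · rw [hW]
    have hqP : latpt q ∈ P := extremePoints_subset hb
    exact ncard_lt_ncard ⟨preimage_mono hTP, fun h => hqT (h hqP)⟩
      (finite_preimage_latpt (hV.isCompact_convexHull ℝ))

theorem exists_latticePolygon_subset_frontier_latpt_mem_extremePoints (V : Finset (ℤ × ℤ)) :
    ∃ W : Finset (ℤ × ℤ), latticePolygon W ⊆ latticePolygon V ∧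
      ((latticePolygon W).extremePoints ℝ).ncard = ((latticePolygon V).extremePoints ℝ).ncard ∧
      ∀ p : ℤ × ℤ, latpt p ∈ frontier (latticePolygon W) →
        latpt p ∈ (latticePolygon W).extremePoints ℝ := by
  induction hn : (latpt ⁻¹' latticePolygon V).ncard using Nat.strong_induction_on
    generalizing V with
  | _ n ih =>
    by_cases h : ∀ p : ℤ × ℤ, latpt p ∈ frontier (latticePolygon V) →
        latpt p ∈ (latticePolygon V).extremePoints ℝ
    · exact ⟨V, subset_rfl, rfl, h⟩
    push Not at h
    obtain ⟨p, hpf, hpe⟩ := h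
    obtain ⟨W, hWV, hWe, hWn⟩ := exists_latticePolygon_fewer_latticePoints V hpf hpe
    obtain ⟨U, hUW, hUe, hU⟩ := ih _ (hn ▸ hWn) W rfl
    exact ⟨U, hUW.trans hWV, hUe.trans hWe, hU⟩

end Lattice

theorem stmt13_general (V : Finset (ℤ × ℤ)) (P : Set (ℝ × ℝ))
    (hP : P = convexHull ℝ (latpt '' (V : Set (ℤ × ℤ)))) :
    ∃ V' : Finset (ℤ × ℤ),
      convexHull ℝ (latpt '' (V' : Set (ℤ × ℤ))) ⊆ P ∧
      (Set.extremePoints ℝ (convexHull ℝ (latpt '' (V' : Set (ℤ × ℤ))))).ncard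
        = (Set.extremePoints ℝ P).ncard ∧
      ∀ p : ℤ × ℤ, latpt p ∈ frontier (convexHull ℝ (latpt '' (V' : Set (ℤ × ℤ)))) →
        latpt p ∈ Set.extremePoints ℝ (convexHull ℝ (latpt '' (V' : Set (ℤ × ℤ)))) := by
  subst hP
  exact exists_latticePolygon_subset_frontier_latpt_mem_extremePoints V

theorem stmt13 (V : Finset (ℤ × ℤ)) (P : Set (ℝ × ℝ))
    (hP : P = convexHull ℝ (latpt '' (V : Set (ℤ × ℤ))))
    (hv : 2 ≤ (Set.extremePoints ℝ P).ncard) :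
    ∃ V' : Finset (ℤ × ℤ),
      convexHull ℝ (latpt '' (V' : Set (ℤ × ℤ))) ⊆ P ∧
      (Set.extremePoints ℝ (convexHull ℝ (latpt '' (V' : Set (ℤ × ℤ))))).ncard
        = (Set.extremePoints ℝ P).ncard ∧
      ∀ p : ℤ × ℤ, latpt p ∈ frontier (convexHull ℝ (latpt '' (V' : Set (ℤ × ℤ)))) →
        latpt p ∈ Set.extremePoints ℝ (convexHull ℝ (latpt '' (V' : Set (ℤ × ℤ)))) :=
  stmt13_general V P hP
end
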